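/- arXiv:1210.5048 — 6 statements merged into one kernel-verified Lean document; each statement's English description precedes it below -/
import Mathlib

section
/- Let T(x) be a homogeneous polynomial of odd degree 2ℓ-1 in variables x = (x₁,…,xₙ), and define T'(x') = T(x)·x₀ for x' = (x₀,x₁,…,xₙ). Then max over x' in the unit sphere Sⁿ of T'(x') equals γ(ℓ) times the max over x in S^(n-1) of T(x), where γ(ℓ) = (2ℓ-1)^(ℓ-1/2)/(ℓ^ℓ·2^ℓ). -/
/-!
Write `x' = (t, s • u)` with `u` on the unit sphere and `s ^ 2 + t ^ 2 = 1`. Homogeneity of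
degree `d = 2ℓ - 1` gives `T'(x') = s ^ d * t * T(u)`, and since `d` is odd, `T(-u) = -T(u)`, so
the maximum `M` of `T` on the sphere is also the maximum of `|T|` there. Hence
`T'(x') ≤ (s ^ d * t) * M`, and weighted AM-GM applied to `s ^ 2` and `t ^ 2` bounds `s ^ d * t`
by `√(d ^ d / (d + 1) ^ (d + 1)) = γ(ℓ)`, with equality at `s ^ 2 = d / (d + 1)`,
`t ^ 2 = 1 / (d + 1)`; taking `u` a maximiser of `T` attains the bound.
-/

open MvPolynomial

namespace MvPolynomial.IsHomogeneous

variable {σ R : Type*} {d : ℕ}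

section CommSemiring

variable [CommSemiring R] {φ : MvPolynomial σ R}

theorem eval_smul (hφ : φ.IsHomogeneous d) (c : R) (x : σ → R) :
    eval (c • x) φ = c ^ d * eval x φ := by
  rw [eval_eq, eval_eq, Finset.mul_sum]
  refine Finset.sum_congr rfl fun m hm => ?_
  have hdeg : ∑ i ∈ m.support, m i = d := by
    simpa [Finsupp.weight_apply, Finsupp.sum] using hφ (Finsupp.mem_support_iff.mp hm)
  simp only [Pi.smul_apply, smul_eq_mul, mul_pow, Finset.prod_mul_distrib,
    Finset.prod_pow_eq_pow_sum, hdeg]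
  ring

theorem eval_zero_of_ne_zero (hφ : φ.IsHomogeneous d) (hd : d ≠ 0) :
    eval 0 φ = 0 := by
  simpa [zero_pow hd] using hφ.eval_smul 0 0

end CommSemiring

theorem eval_neg [CommRing R] {φ : MvPolynomial σ R} (hφ : φ.IsHomogeneous d) (hd : Odd d)
    (x : σ → R) :
    eval (-x) φ = -eval x φ := by
  rw [← neg_one_smul R x, hφ.eval_smul, hd.neg_one_pow, neg_one_mul]

end MvPolynomial.IsHomogeneous

theorem pow_mul_le_of_add_eq_one (d : ℕ) {a b : ℝ} (ha : 0 ≤ a) (hb : 0 ≤ b) (hab : a + b = 1) :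
    a ^ d * b ≤ d ^ d / (d + 1) ^ (d + 1) := by
  rcases d.eq_zero_or_pos with rfl | hd
  · simpa using hab ▸ le_add_of_nonneg_left ha
  have hd' : (0 : ℝ) < d := by exact_mod_cast hd
  have amgm := Real.geom_mean_le_arith_mean2_weighted (w₁ := d / (d + 1)) (w₂ := 1 / (d + 1))
    (p₁ := a * (d + 1) / d) (p₂ := b * (d + 1)) (by positivity) (by positivity) (by positivity)
    (by positivity) (by field_simp)
  have hmean : d / (d + 1) * (a * (d + 1) / d) + 1 / (d + 1) * (b * (d + 1)) = 1 := by
    field_simp; linear_combination hab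
  rw [hmean] at amgm
  have key : (a * (d + 1) / d) ^ d * (b * (d + 1)) ≤ 1 := by
    have := pow_le_one₀ (by positivity) amgm (n := d + 1)
    rwa [mul_pow, ← Real.rpow_natCast, ← Real.rpow_natCast, ← Real.rpow_mul (by positivity),
      ← Real.rpow_mul (by positivity), Nat.cast_add_one, div_mul_cancel₀ _ (by positivity),
      div_mul_cancel₀ _ (by positivity), Real.rpow_one, Real.rpow_natCast] at this
  rw [le_div_iff₀ (by positivity)]
  calc a ^ d * b * (d + 1) ^ (d + 1) = d ^ d * ((a * (d + 1) / d) ^ d * (b * (d + 1))) := by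
        rw [div_pow, mul_pow, pow_succ]; field_simp
    _ ≤ d ^ d := mul_le_of_le_one_right (by positivity) key

theorem pow_mul_le_sqrt_of_sq_add_sq_eq_one (d : ℕ) {s t : ℝ} (h : s ^ 2 + t ^ 2 = 1) :
    s ^ d * t ≤ √(d ^ d / (d + 1) ^ (d + 1)) := by
  have hsq : (s ^ d * t) ^ 2 ≤ d ^ d / (d + 1) ^ (d + 1) := by
    rw [mul_pow, ← pow_mul, mul_comm d, pow_mul]
    exact pow_mul_le_of_add_eq_one d (sq_nonneg s) (sq_nonneg t) h
  exact (le_abs_self _).trans (Real.abs_le_sqrt hsq)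

theorem sqrt_pow_mul_sqrt_eq (d : ℕ) :
    √(d / (d + 1)) ^ d * √(1 / (d + 1)) = √(d ^ d / (d + 1) ^ (d + 1)) := by
  rw [eq_comm, Real.sqrt_eq_iff_eq_sq (by positivity) (by positivity), mul_pow, ← pow_mul,
    mul_comm d, pow_mul, Real.sq_sqrt (by positivity), Real.sq_sqrt (by positivity), div_pow,
    pow_succ]
  field_simp

theorem sq_sqrt_add_sq_sqrt_eq_one (d : ℕ) : √(d / (d + 1)) ^ 2 + √(1 / (d + 1)) ^ 2 = 1 := by
  rw [Real.sq_sqrt (by positivity), Real.sq_sqrt (by positivity)]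
  field_simp

section SphereSup

variable {ι : Type*} [Fintype ι]

theorem isCompact_setOf_sum_sq_eq_one : IsCompact {x : ι → ℝ | ∑ i, x i ^ 2 = 1} := by
  refine Metric.isCompact_of_isClosed_isBounded (isClosed_eq (by fun_prop) continuous_const)
    ((Metric.isBounded_closedBall (x := 0) (r := 1)).subset fun x hx => ?_)
  rw [mem_closedBall_zero_iff, pi_norm_le_iff_of_nonneg zero_le_one]
  intro i
  rw [Real.norm_eq_abs, ← sq_le_one_iff_abs_le_one, ← hx.out]
  exact Finset.single_le_sum (fun j _ => sq_nonneg (x j)) (Finset.mem_univ i)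

noncomputable def sphereSup (f : (ι → ℝ) → ℝ) : ℝ :=
  sSup {y | ∃ x : ι → ℝ, ∑ i, x i ^ 2 = 1 ∧ y = f x}

theorem setOf_sphere_eq_image (f : (ι → ℝ) → ℝ) :
    {y | ∃ x : ι → ℝ, ∑ i, x i ^ 2 = 1 ∧ y = f x} = f '' {x | ∑ i, x i ^ 2 = 1} := by
  ext y
  simp [eq_comm]

variable {f : (ι → ℝ) → ℝ}

theorem le_sphereSup (hf : Continuous f) {x : ι → ℝ} (hx : ∑ i, x i ^ 2 = 1) :
    f x ≤ sphereSup f := by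
  rw [sphereSup, setOf_sphere_eq_image]
  exact le_csSup (isCompact_setOf_sum_sq_eq_one.image hf).bddAbove ⟨x, hx, rfl⟩

theorem exists_eq_sphereSup (hf : Continuous f) {x : ι → ℝ} (hx : ∑ i, x i ^ 2 = 1) :
    ∃ u : ι → ℝ, ∑ i, u i ^ 2 = 1 ∧ f u = sphereSup f := by
  rw [sphereSup, setOf_sphere_eq_image]
  exact (isCompact_setOf_sum_sq_eq_one.image hf).sSup_mem ⟨f x, x, hx, rfl⟩

end SphereSup

section Homogeneous

variable {ι : Type*} [Fintype ι] {T : MvPolynomial ι ℝ} {d : ℕ}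

theorem abs_eval_le_sphereSup (hT : T.IsHomogeneous d) (hd : Odd d) {x : ι → ℝ}
    (hx : ∑ i, x i ^ 2 = 1) : |eval x T| ≤ sphereSup (eval · T) := by
  have hneg := le_sphereSup (continuous_eval T) (x := -x) (by simpa using hx)
  rw [hT.eval_neg hd] at hneg
  exact abs_le.mpr ⟨by linarith, le_sphereSup (continuous_eval T) hx⟩

theorem sphereSup_nonneg (hT : T.IsHomogeneous d) (hd : Odd d) :
    0 ≤ sphereSup (eval · T) := by
  by_cases h : ∃ x : ι → ℝ, ∑ i, x i ^ 2 = 1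
  · obtain ⟨x, hx⟩ := h
    exact (abs_nonneg _).trans (abs_eval_le_sphereSup hT hd hx)
  · simp [sphereSup, not_exists.mp h]

theorem abs_eval_le_sphereSup_mul (hT : T.IsHomogeneous d) (hd : Odd d) (x : ι → ℝ) :
    |eval x T| ≤ sphereSup (eval · T) * √(∑ i, x i ^ 2) ^ d := by
  obtain hs | hs := (Real.sqrt_nonneg (∑ i, x i ^ 2)).eq_or_lt
  · have hx : x = 0 := funext fun i => pow_eq_zero_iff two_ne_zero |>.mp <|
      (Finset.sum_eq_zero_iff_of_nonneg fun j _ => sq_nonneg (x j)).mp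
        ((Real.sqrt_eq_zero (by positivity)).mp hs.symm) i (Finset.mem_univ i)
    rw [← hs, zero_pow hd.pos.ne', mul_zero, hx, hT.eval_zero_of_ne_zero hd.pos.ne', abs_zero]
  set s := √(∑ i, x i ^ 2)
  have hu : ∑ i, (s⁻¹ • x) i ^ 2 = 1 := by
    simp only [Pi.smul_apply, smul_eq_mul, mul_pow, ← Finset.mul_sum]
    rw [inv_pow, Real.sq_sqrt (by positivity), inv_mul_cancel₀ (Real.sqrt_pos.mp hs).ne']
  calc |eval x T| = s ^ d * |eval (s⁻¹ • x) T| := by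
        rw [← abs_of_pos (pow_pos hs d), ← abs_mul, ← hT.eval_smul, smul_smul,
          mul_inv_cancel₀ hs.ne', one_smul]
    _ ≤ s ^ d * sphereSup (eval · T) := by gcongr; exact abs_eval_le_sphereSup hT hd hu
    _ = sphereSup (eval · T) * s ^ d := mul_comm _ _

end Homogeneous

section AddVariable

variable {n d : ℕ} {T : MvPolynomial (Fin n) ℝ}

theorem eval_rename_succ_mul_X_zero {R : Type*} [CommSemiring R] (φ : MvPolynomial (Fin n) R)
    (x : Fin (n + 1) → R) : eval x (rename Fin.succ φ * X 0) = eval (Fin.tail x) φ * x 0 := by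
  rw [map_mul, eval_rename, eval_X]
  rfl

theorem eval_rename_succ_mul_X_zero_le (hT : T.IsHomogeneous d) (hd : Odd d)
    {x : Fin (n + 1) → ℝ} (hx : ∑ i, x i ^ 2 = 1) :
    eval x (rename Fin.succ T * X 0) ≤ √(d ^ d / (d + 1) ^ (d + 1)) * sphereSup (eval · T) := by
  set s := √(∑ i, Fin.tail x i ^ 2)
  have hst : s ^ 2 + |x 0| ^ 2 = 1 := by
    rw [Real.sq_sqrt (by positivity), sq_abs, add_comm, ← hx, Fin.sum_univ_succ]
    rfl
  rw [eval_rename_succ_mul_X_zero]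
  calc eval (Fin.tail x) T * x 0 ≤ |eval (Fin.tail x) T| * |x 0| := by
        rw [← abs_mul]; exact le_abs_self _
    _ ≤ sphereSup (eval · T) * s ^ d * |x 0| := by
        gcongr; exact abs_eval_le_sphereSup_mul hT hd _
    _ = s ^ d * |x 0| * sphereSup (eval · T) := by ring
    _ ≤ √(d ^ d / (d + 1) ^ (d + 1)) * sphereSup (eval · T) := by
        gcongr
        · exact sphereSup_nonneg hT hd
        · exact pow_mul_le_sqrt_of_sq_add_sq_eq_one d hst

theorem exists_eval_rename_succ_mul_X_zero_eq (hT : T.IsHomogeneous d) (hd : Odd d) :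
    ∃ x : Fin (n + 1) → ℝ, ∑ i, x i ^ 2 = 1 ∧
      eval x (rename Fin.succ T * X 0) = √(d ^ d / (d + 1) ^ (d + 1)) * sphereSup (eval · T) := by
  cases n with
  | zero =>
    -- the unit sphere of `ℝ⁰` is empty, and `sSup ∅ = 0`
    refine ⟨fun _ => 1, by simp, ?_⟩
    have : sphereSup (eval · T) = 0 := by simp [sphereSup]
    rw [eval_rename_succ_mul_X_zero, Subsingleton.elim (Fin.tail _) 0,
      hT.eval_zero_of_ne_zero hd.pos.ne', this]
    simp
  | succ m =>
    obtain ⟨u, hu, huM⟩ := exists_eq_sphereSup (continuous_eval T) (x := Pi.single 0 1)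
      (by simp [Pi.single_apply])
    refine ⟨Fin.cons √(1 / (d + 1)) (√(d / (d + 1)) • u), ?_, ?_⟩
    · rw [Fin.sum_univ_succ]
      simp only [Fin.cons_zero, Fin.cons_succ, Pi.smul_apply, smul_eq_mul, mul_pow,
        ← Finset.mul_sum, hu, mul_one]
      linarith [sq_sqrt_add_sq_sqrt_eq_one d]
    · rw [eval_rename_succ_mul_X_zero, Fin.tail_cons, Fin.cons_zero, hT.eval_smul,
        ← sqrt_pow_mul_sqrt_eq, huM]
      ring

theorem sphereSup_eval_rename_succ_mul_X_zero (hT : T.IsHomogeneous d) (hd : Odd d) :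
    sphereSup (eval · (rename Fin.succ T * X 0)) =
      √(d ^ d / (d + 1) ^ (d + 1)) * sphereSup (eval · T) := by
  obtain ⟨x, hx, hxeq⟩ := exists_eval_rename_succ_mul_X_zero_eq hT hd
  refine IsGreatest.csSup_eq ⟨⟨x, hx, hxeq.symm⟩, ?_⟩
  rintro _ ⟨y, hy, rfl⟩
  exact eval_rename_succ_mul_X_zero_le hT hd hy

end AddVariable

theorem rpow_sub_half_div_eq_sqrt {ℓ : ℕ} (hℓ : 1 ≤ ℓ) :
    (2 * (ℓ : ℝ) - 1) ^ ((ℓ : ℝ) - 1 / 2) / ((ℓ : ℝ) ^ ℓ * 2 ^ ℓ) =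
      √(((2 * ℓ - 1 : ℕ) : ℝ) ^ (2 * ℓ - 1) / (((2 * ℓ - 1 : ℕ) : ℝ) + 1) ^ (2 * ℓ - 1 + 1)) := by
  have hcast : ((2 * ℓ - 1 : ℕ) : ℝ) = 2 * ℓ - 1 := by
    push_cast [Nat.cast_sub (by omega : 1 ≤ 2 * ℓ)]; ring
  have hpos : 0 < 2 * (ℓ : ℝ) - 1 := by rw [← hcast]; exact_mod_cast (by omega : 0 < 2 * ℓ - 1)
  have hexp : ((ℓ : ℝ) - 1 / 2) * (2 : ℕ) = ((2 * ℓ - 1 : ℕ) : ℝ) := by rw [hcast]; push_cast; ring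
  rw [hcast, sub_add_cancel, Nat.sub_add_cancel (by omega), eq_comm,
    Real.sqrt_eq_iff_eq_sq (by positivity) (by positivity), div_pow,
    ← Real.rpow_natCast _ 2, ← Real.rpow_mul hpos.le, hexp, Real.rpow_natCast]
  congr 1
  rw [mul_pow, mul_pow, ← pow_mul, ← pow_mul]
  ring

/-- Relating optimal solutions of even and odd degree: if `T` is a homogeneous
polynomial of odd degree `2ℓ-1` in variables `x = (x₁,…,xₙ)` and
`T'(x₀,x₁,…,xₙ) = T(x)·x₀`, then the maximum of `T'` over the unit sphere `Sⁿ`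
equals `γ(ℓ) = (2ℓ-1)^(ℓ-1/2)/(ℓ^ℓ·2^ℓ)` times the maximum of `T` over `S^(n-1)`. -/
theorem stmt1 (n ℓ : ℕ) (hℓ : 1 ≤ ℓ) (T : MvPolynomial (Fin n) ℝ)
    (hT : T.IsHomogeneous (2 * ℓ - 1)) :
    sSup {y : ℝ | ∃ x' : Fin (n + 1) → ℝ, ∑ i, x' i ^ 2 = 1 ∧
        y = MvPolynomial.eval x' (MvPolynomial.rename Fin.succ T * MvPolynomial.X 0)} =
      ((2 * (ℓ : ℝ) - 1) ^ ((ℓ : ℝ) - 1 / 2) / ((ℓ : ℝ) ^ ℓ * 2 ^ ℓ)) *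
        sSup {y : ℝ | ∃ x : Fin n → ℝ, ∑ i, x i ^ 2 = 1 ∧ y = MvPolynomial.eval x T} := by
  rw [rpow_sub_half_div_eq_sqrt hℓ]
  exact sphereSup_eval_rename_succ_mul_X_zero hT ⟨ℓ - 1, by omega⟩
end

section
/- For natural numbers ℓ, j, n with n ≥ 3, the integral λ(n,ℓ,j) = ∫₋₁¹ t^(2ℓ) P_j(t) (1-t²)^((n-3)/2) dt equals √π/2^(2ℓ) · Γ((n-1)/2)Γ(2ℓ+1) / (Γ(ℓ+1-j/2)Γ(ℓ+(n+j)/2)) when j is even and j ≤ 2ℓ, and equals 0 when j is odd or j > 2ℓ. -/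
open MeasureTheory Real

/-- The Gegenbauer polynomial (in dimension `n`) given by the Rodrigues formula
`P_j(t) = (-1/2)^j · (Γ((n-1)/2)/Γ(j+(n-1)/2)) · (1-t²)^(-(n-3)/2) · (d/dt)^j (1-t²)^(j+(n-3)/2)`. -/
noncomputable def gegenbauerP (n j : ℕ) (t : ℝ) : ℝ :=
  (-(1 : ℝ) / 2) ^ j * (Real.Gamma (((n : ℝ) - 1) / 2) / Real.Gamma ((j : ℝ) + ((n : ℝ) - 1) / 2)) *
    (1 - t ^ 2) ^ (-(((n : ℝ) - 3) / 2)) *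
    iteratedDeriv j (fun s : ℝ => (1 - s ^ 2) ^ ((j : ℝ) + ((n : ℝ) - 3) / 2)) t

/-- The Funk–Hecke coefficient `λ(n,ℓ,j) = ∫₋₁¹ t^(2ℓ) P_j(t) (1-t²)^((n-3)/2) dt`. -/
noncomputable def lamFH (n ℓ j : ℕ) : ℝ :=
  ∫ t in (-1 : ℝ)..(1 : ℝ), t ^ (2 * ℓ) * gegenbauerP n j t * (1 - t ^ 2) ^ (((n : ℝ) - 3) / 2)

/-! Substituting the Rodrigues formula, the weight `(1 - t²)^((n-3)/2)` cancels and `λ(n,ℓ,j)` is a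
multiple of `∫ t^(2ℓ) D^j (1 - t²)^p` with `p = j + (n-3)/2 ≥ j`. Integrating by parts `j` times
moves the derivatives onto `t^(2ℓ)`; the boundary terms vanish because `D^k (1 - t²)^p` is a
polynomial times `(1 - t²)^(p-k)`. This kills the integral when `j > 2ℓ` and otherwise leaves
the moment `∫ t^(2ℓ-j) (1 - t²)^p`, which vanishes for an odd exponent and for an even one
becomes a Beta integral after `u = t²`. Legendre's duplication formula turns `Γ(m + 1/2)` into
factorials. -/

open scoped Nat

open Polynomial in
theorem hasDerivAt_eval_mul_one_sub_sq_rpow (Q : ℝ[X]) {q : ℝ} (hq : 1 ≤ q) (t : ℝ) :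
    HasDerivAt (fun s => Q.eval s * (1 - s ^ 2) ^ q)
      ((derivative Q * (1 - X ^ 2) - C (2 * q) * X * Q).eval t * (1 - t ^ 2) ^ (q - 1)) t := by
  have hbase : HasDerivAt (fun s : ℝ => 1 - s ^ 2) (-(2 * t)) t := by
    simpa using (hasDerivAt_pow 2 t).const_sub 1
  have h : HasDerivAt (fun s => Q.eval s * (1 - s ^ 2) ^ q) _ t :=
    (Q.hasDerivAt t).mul (hbase.rpow_const (Or.inr hq))
  convert h using 1
  simp only [eval_sub, eval_mul, eval_pow, eval_one, eval_C, eval_X]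
  have hsplit : (1 - t ^ 2) ^ q = (1 - t ^ 2) ^ (q - 1) * (1 - t ^ 2) := by
    rcases eq_or_ne (1 - t ^ 2) 0 with h0 | h0
    · rw [h0, zero_rpow (by linarith), mul_zero]
    · rw [← rpow_add_one h0, sub_add_cancel]
  rw [hsplit]
  ring

open Polynomial in
theorem exists_iteratedDeriv_one_sub_sq_rpow_eq {p : ℝ} {k : ℕ} (hk : (k : ℝ) ≤ p) :
    ∃ Q : ℝ[X], iteratedDeriv k (fun s : ℝ => (1 - s ^ 2) ^ p) =
      fun t => Q.eval t * (1 - t ^ 2) ^ (p - k) := by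
  induction k with
  | zero => exact ⟨1, by simp⟩
  | succ k ih =>
    push_cast at hk
    obtain ⟨Q, hQ⟩ := ih (by linarith)
    refine ⟨derivative Q * (1 - X ^ 2) - C (2 * (p - k)) * X * Q, funext fun t => ?_⟩
    rw [iteratedDeriv_succ, hQ, (hasDerivAt_eval_mul_one_sub_sq_rpow Q (by linarith) t).deriv]
    push_cast
    ring_nf

theorem iteratedDeriv_one_sub_sq_rpow_eq_zero {p t : ℝ} {k : ℕ} (hk : (k : ℝ) < p)
    (ht : t ^ 2 = 1) : iteratedDeriv k (fun s : ℝ => (1 - s ^ 2) ^ p) t = 0 := by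
  obtain ⟨Q, hQ⟩ := exists_iteratedDeriv_one_sub_sq_rpow_eq hk.le
  simp only [hQ, ht, sub_self, zero_rpow (by linarith : p - k ≠ 0), mul_zero]

theorem continuous_one_sub_sq_rpow {p : ℝ} (hp : 0 ≤ p) :
    Continuous fun t : ℝ => (1 - t ^ 2) ^ p :=
  (continuous_const.sub (continuous_pow 2)).rpow_const fun _ => Or.inr hp

theorem integral_pow_mul_iteratedDeriv_succ_one_sub_sq_rpow {p : ℝ} {k : ℕ}
    (hk : (k : ℝ) + 1 ≤ p) (m : ℕ) :
    ∫ t in (-1 : ℝ)..1, t ^ m * iteratedDeriv (k + 1) (fun s : ℝ => (1 - s ^ 2) ^ p) t =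
      -m * ∫ t in (-1 : ℝ)..1, t ^ (m - 1) * iteratedDeriv k (fun s : ℝ => (1 - s ^ 2) ^ p) t := by
  set f : ℝ → ℝ := fun s => (1 - s ^ 2) ^ p
  obtain ⟨Q, hQ⟩ := exists_iteratedDeriv_one_sub_sq_rpow_eq (p := p) (k := k) (by linarith)
  obtain ⟨Q', hQ'⟩ := exists_iteratedDeriv_one_sub_sq_rpow_eq (p := p) (k := k + 1)
    (by push_cast; linarith)
  have hderiv (x : ℝ) : HasDerivAt (iteratedDeriv k f) (iteratedDeriv (k + 1) f x) x := by
    have h := hasDerivAt_eval_mul_one_sub_sq_rpow Q (q := p - k) (by linarith) x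
    rw [← hQ] at h
    rwa [iteratedDeriv_succ, h.deriv]
  have hcont : Continuous (iteratedDeriv (k + 1) f) := by
    rw [hQ']
    exact Q'.continuous.mul (continuous_one_sub_sq_rpow (by push_cast; linarith))
  rw [intervalIntegral.integral_mul_deriv_eq_deriv_mul (fun x _ => hasDerivAt_pow m x)
      (fun x _ => hderiv x) ((by fun_prop : Continuous _).intervalIntegrable _ _)
      (hcont.intervalIntegrable _ _),
    iteratedDeriv_one_sub_sq_rpow_eq_zero (by linarith) (by norm_num),
    iteratedDeriv_one_sub_sq_rpow_eq_zero (by linarith) (by norm_num),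
    ← intervalIntegral.integral_const_mul, mul_zero, mul_zero, sub_zero, zero_sub,
    ← intervalIntegral.integral_neg]
  exact intervalIntegral.integral_congr fun x _ => by ring

theorem integral_pow_mul_iteratedDeriv_one_sub_sq_rpow {p : ℝ} {k : ℕ} (hk : (k : ℝ) ≤ p)
    (m : ℕ) :
    ∫ t in (-1 : ℝ)..1, t ^ m * iteratedDeriv k (fun s : ℝ => (1 - s ^ 2) ^ p) t =
      if k ≤ m then
        (-1 : ℝ) ^ k * m.descFactorial k * ∫ t in (-1 : ℝ)..1, t ^ (m - k) * (1 - t ^ 2) ^ p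
      else 0 := by
  induction k generalizing m with
  | zero => simp
  | succ k ih =>
    push_cast at hk
    rw [integral_pow_mul_iteratedDeriv_succ_one_sub_sq_rpow hk]
    rcases m with _ | m
    · simp
    rw [ih (by linarith), Nat.add_sub_cancel]
    by_cases hkm : k ≤ m
    · rw [if_pos hkm, if_pos (by omega), Nat.succ_descFactorial_succ, Nat.add_sub_add_right]
      push_cast
      ring
    · rw [if_neg hkm, if_neg (by omega), mul_zero]

theorem integral_pow_mul_one_sub_sq_rpow_of_odd {m : ℕ} (hm : Odd m) (p : ℝ) :
    ∫ t in (-1 : ℝ)..1, t ^ m * (1 - t ^ 2) ^ p = 0 := by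
  have h := intervalIntegral.integral_comp_neg (a := -1) (b := 1)
    fun t : ℝ => t ^ m * (1 - t ^ 2) ^ p
  simp only [neg_neg, hm.neg_pow, even_two.neg_pow, neg_mul, intervalIntegral.integral_neg] at h
  linarith

theorem integral_pow_mul_one_sub_sq_rpow_of_even {m : ℕ} (hm : Even m) {p : ℝ} (hp : 0 ≤ p) :
    ∫ t in (-1 : ℝ)..1, t ^ m * (1 - t ^ 2) ^ p =
      2 * ∫ t in (0 : ℝ)..1, t ^ m * (1 - t ^ 2) ^ p := by
  have hcont : Continuous fun t : ℝ => t ^ m * (1 - t ^ 2) ^ p :=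
    (continuous_pow m).mul (continuous_one_sub_sq_rpow hp)
  have h := intervalIntegral.integral_comp_neg (a := 0) (b := 1)
    fun t : ℝ => t ^ m * (1 - t ^ 2) ^ p
  simp only [neg_zero, hm.neg_pow, even_two.neg_pow] at h
  rw [← intervalIntegral.integral_add_adjacent_intervals (b := 0)
    (hcont.intervalIntegrable _ _) (hcont.intervalIntegrable _ _), ← h]
  ring

theorem integral_rpow_mul_one_sub_rpow_eq_two_mul_integral (m : ℕ) (p : ℝ) :
    ∫ u in (0 : ℝ)..1, u ^ ((m : ℝ) - 1 / 2) * (1 - u) ^ p =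
      2 * ∫ t in (0 : ℝ)..1, t ^ (2 * m) * (1 - t ^ 2) ^ p := by
  have h := intervalIntegral.integral_comp_mul_deriv_of_deriv_nonneg (a := 0) (b := 1)
    (f := fun t => t ^ 2) (f' := fun t => 2 * t)
    (g := fun u => u ^ ((m : ℝ) - 1 / 2) * (1 - u) ^ p) (by fun_prop)
    (fun x _ => by simpa using hasDerivAt_pow 2 x)
    (fun x hx => by simp only [min_eq_left (zero_le_one' ℝ), Set.mem_Ioo] at hx; linarith)
  simp only [Function.comp_apply, zero_pow two_ne_zero, one_pow] at h
  rw [← h, ← intervalIntegral.integral_const_mul]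
  refine intervalIntegral.integral_congr_ae (ae_of_all _ fun t ht => ?_)
  have ht0 : 0 < t := (Set.uIoc_of_le (zero_le_one' ℝ) ▸ ht).1
  have hsq : (t ^ 2) ^ ((m : ℝ) - 1 / 2) = t ^ (2 * m) / t := by
    rw [rpow_sub (by positivity), ← sqrt_eq_rpow, sqrt_sq ht0.le, rpow_natCast, ← pow_mul]
  rw [hsq]
  field_simp

theorem integral_rpow_mul_one_sub_rpow_eq_Gamma {a b : ℝ} (ha : 0 < a) (hb : 0 < b) :
    ∫ x in (0 : ℝ)..1, x ^ (a - 1) * (1 - x) ^ (b - 1) =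
      Real.Gamma a * Real.Gamma b / Real.Gamma (a + b) := by
  have hβ : Complex.betaIntegral a b = ↑(∫ x in (0 : ℝ)..1, x ^ (a - 1) * (1 - x) ^ (b - 1)) := by
    rw [Complex.betaIntegral, ← intervalIntegral.integral_ofReal]
    refine intervalIntegral.integral_congr fun x hx => ?_
    rw [Set.uIcc_of_le zero_le_one] at hx
    push_cast
    rw [Complex.ofReal_cpow hx.1, Complex.ofReal_cpow (sub_nonneg.2 hx.2)]
    push_cast
    rfl
  apply Complex.ofReal_injective
  rw [← hβ, Complex.betaIntegral_eq_Gamma_mul_div _ _ (by simpa) (by simpa)]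
  push_cast [← Complex.ofReal_add, Complex.Gamma_ofReal]
  rfl

theorem integral_pow_two_mul_mul_one_sub_sq_rpow (m : ℕ) {p : ℝ} (hp : 0 ≤ p) :
    ∫ t in (-1 : ℝ)..1, t ^ (2 * m) * (1 - t ^ 2) ^ p =
      Real.Gamma (m + 1 / 2) * Real.Gamma (p + 1) / Real.Gamma (m + p + 3 / 2) := by
  have hβ := integral_rpow_mul_one_sub_rpow_eq_Gamma (a := m + 1 / 2) (b := p + 1)
    (by positivity) (by linarith)
  rw [show (m : ℝ) + 1 / 2 - 1 = m - 1 / 2 by ring, add_sub_cancel_right,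
    show (m : ℝ) + 1 / 2 + (p + 1) = m + p + 3 / 2 by ring] at hβ
  rw [integral_pow_mul_one_sub_sq_rpow_of_even (even_two_mul m) hp,
    ← integral_rpow_mul_one_sub_rpow_eq_two_mul_integral, hβ]

theorem Gamma_nat_add_half_mul (m : ℕ) :
    Real.Gamma (m + 1 / 2) * (2 ^ (2 * m) * m !) = √π * (2 * m)! := by
  have h := Real.Gamma_mul_Gamma_add_half (m + 1 / 2)
  rw [show (m : ℝ) + 1 / 2 + 1 / 2 = m + 1 by ring, Real.Gamma_nat_eq_factorial,
    show 2 * ((m : ℝ) + 1 / 2) = ((2 * m : ℕ) : ℝ) + 1 by push_cast; ring,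
    Real.Gamma_nat_eq_factorial, show 1 - (((2 * m : ℕ) : ℝ) + 1) = -((2 * m : ℕ) : ℝ) by ring,
    rpow_neg zero_le_two, rpow_natCast] at h
  rw [← mul_assoc, mul_right_comm, h]
  field_simp

theorem lamFH_eq_integral_iteratedDeriv (n ℓ j : ℕ) :
    lamFH n ℓ j = (-1 / 2) ^ j *
        (Real.Gamma (((n : ℝ) - 1) / 2) / Real.Gamma ((j : ℝ) + ((n : ℝ) - 1) / 2)) *
      ∫ t in (-1 : ℝ)..1, t ^ (2 * ℓ) *
        iteratedDeriv j (fun s : ℝ => (1 - s ^ 2) ^ ((j : ℝ) + ((n : ℝ) - 3) / 2)) t := by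
  rw [lamFH, ← intervalIntegral.integral_const_mul]
  refine intervalIntegral.integral_congr_ae ?_
  filter_upwards [volume.ae_ne 1] with t ht1 ht
  rw [Set.uIoc_of_le (by norm_num)] at ht
  have hpos : 0 < 1 - t ^ 2 := by
    have := lt_of_le_of_ne ht.2 ht1
    nlinarith [ht.1]
  have hw : 0 < (1 - t ^ 2) ^ (((n : ℝ) - 3) / 2) := rpow_pos_of_pos hpos _
  rw [gegenbauerP, rpow_neg hpos.le]
  field_simp

theorem lamFH_eq_ite (n ℓ j : ℕ) (hn : 3 ≤ n) :
    lamFH n ℓ j = if j ≤ 2 * ℓ then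
      Real.Gamma (((n : ℝ) - 1) / 2) / (2 ^ j * Real.Gamma ((j : ℝ) + ((n : ℝ) - 1) / 2)) *
        (2 * ℓ).descFactorial j *
        ∫ t in (-1 : ℝ)..1, t ^ (2 * ℓ - j) * (1 - t ^ 2) ^ ((j : ℝ) + ((n : ℝ) - 3) / 2)
    else 0 := by
  have hn' : (3 : ℝ) ≤ n := by exact_mod_cast hn
  rw [lamFH_eq_integral_iteratedDeriv,
    integral_pow_mul_iteratedDeriv_one_sub_sq_rpow (by linarith)]
  split_ifs
  · have hsign : (-1 / 2 : ℝ) ^ j * (-1) ^ j = (2 ^ j)⁻¹ := by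
      rw [← mul_pow, ← inv_pow]
      norm_num
    linear_combination Real.Gamma (((n : ℝ) - 1) / 2) / Real.Gamma ((j : ℝ) + ((n : ℝ) - 1) / 2) *
      (2 * ℓ).descFactorial j *
      (∫ t in (-1 : ℝ)..1, t ^ (2 * ℓ - j) * (1 - t ^ 2) ^ ((j : ℝ) + ((n : ℝ) - 3) / 2)) * hsign
  · rw [mul_zero]

theorem lamFH_eq_zero_of_odd_or_lt (n ℓ j : ℕ) (hn : 3 ≤ n) (hj : Odd j ∨ 2 * ℓ < j) :
    lamFH n ℓ j = 0 := by
  rw [lamFH_eq_ite n ℓ j hn]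
  split_ifs with hle
  · have hodd : Odd (2 * ℓ - j) :=
      Nat.Even.sub_odd hle (even_two_mul ℓ) (hj.resolve_right (by omega))
    rw [integral_pow_mul_one_sub_sq_rpow_of_odd hodd, mul_zero]
  · rfl

theorem lamFH_eq_of_even_of_le (n ℓ j : ℕ) (hn : 3 ≤ n) (hj : Even j) (hle : j ≤ 2 * ℓ) :
    lamFH n ℓ j = √π / 2 ^ (2 * ℓ) *
        (Real.Gamma (((n : ℝ) - 1) / 2) * Real.Gamma (2 * (ℓ : ℝ) + 1)) /
        (Real.Gamma ((ℓ : ℝ) + 1 - (j : ℝ) / 2) *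
          Real.Gamma ((ℓ : ℝ) + ((n : ℝ) + (j : ℝ)) / 2)) := by
  have hn' : (3 : ℝ) ≤ n := by exact_mod_cast hn
  obtain ⟨i, rfl⟩ := hj
  obtain ⟨m, rfl⟩ : ∃ m, ℓ = i + m := ⟨ℓ - i, by omega⟩
  rw [lamFH_eq_ite n _ _ hn, if_pos hle, show 2 * (i + m) - (i + i) = 2 * m by omega,
    integral_pow_two_mul_mul_one_sub_sq_rpow m (by positivity)]
  have hfact : ((2 * (i + m))! : ℝ) = (2 * m)! * (2 * (i + m)).descFactorial (i + i) := by
    rw [show 2 * m = 2 * (i + m) - (i + i) by omega]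
    exact_mod_cast (Nat.factorial_mul_descFactorial hle).symm
  rw [show 2 * ((i + m : ℕ) : ℝ) + 1 = ((2 * (i + m) : ℕ) : ℝ) + 1 by push_cast; ring,
    Real.Gamma_nat_eq_factorial, hfact,
    show ((i + m : ℕ) : ℝ) + 1 - ((i + i : ℕ) : ℝ) / 2 = m + 1 by push_cast; ring,
    Real.Gamma_nat_eq_factorial,
    show ((i + i : ℕ) : ℝ) + ((n : ℝ) - 3) / 2 + 1 = ((i + i : ℕ) : ℝ) + ((n : ℝ) - 1) / 2 by ring,
    show (m : ℝ) + (((i + i : ℕ) : ℝ) + ((n : ℝ) - 3) / 2) + 3 / 2 =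
      ((i + m : ℕ) : ℝ) + ((n : ℝ) + ((i + i : ℕ) : ℝ)) / 2 by push_cast; ring,
    show (2 : ℝ) ^ (2 * (i + m)) = 2 ^ (i + i) * 2 ^ (2 * m) by rw [← pow_add]; ring_nf]
  have hG : Real.Gamma (((i + i : ℕ) : ℝ) + ((n : ℝ) - 1) / 2) ≠ 0 :=
    (Real.Gamma_pos_of_pos (add_pos_of_nonneg_of_pos (Nat.cast_nonneg _) (by linarith))).ne'
  have hdup := Gamma_nat_add_half_mul m
  generalize Real.Gamma (((i + i : ℕ) : ℝ) + ((n : ℝ) - 1) / 2) = G at hG ⊢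
  generalize Real.Gamma (m + 1 / 2) = g at hdup ⊢
  field_simp
  linear_combination Real.Gamma (((n : ℝ) - 1) / 2) * (2 * (i + m)).descFactorial (i + i) * hdup

/-- For `n ≥ 3`, the Funk–Hecke coefficient `λ(n,ℓ,j)` equals
`√π/2^(2ℓ) · Γ((n-1)/2)Γ(2ℓ+1)/(Γ(ℓ+1-j/2)Γ(ℓ+(n+j)/2))` when `j` is even and `j ≤ 2ℓ`,
and equals `0` when `j` is odd or `j > 2ℓ`. -/
theorem stmt2 (n ℓ j : ℕ) (hn : 3 ≤ n) :
    (Even j → j ≤ 2 * ℓ →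
      lamFH n ℓ j = Real.sqrt π / 2 ^ (2 * ℓ) *
        (Real.Gamma (((n : ℝ) - 1) / 2) * Real.Gamma (2 * (ℓ : ℝ) + 1)) /
        (Real.Gamma ((ℓ : ℝ) + 1 - (j : ℝ) / 2) *
          Real.Gamma ((ℓ : ℝ) + ((n : ℝ) + (j : ℝ)) / 2))) ∧
    (Odd j ∨ 2 * ℓ < j → lamFH n ℓ j = 0) :=
  ⟨lamFH_eq_of_even_of_le n ℓ j hn, lamFH_eq_zero_of_odd_or_lt n ℓ j hn⟩
end

section
/- For natural numbers ℓ, j, n with n ≥ 3 and j even satisfying 2 ≤ j ≤ 2ℓ, we have 1 - λ(n,ℓ,j)/λ(n,ℓ,0) ≤ j((j+n)/2 - 1)/(2ℓ+n). -/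
open MeasureTheory Real

/-!
Put `ν = (n - 3) / 2`. Rodrigues' formula and `j` integrations by parts express `λ(n, ℓ, j)` as an
explicit multiple of `∫₋₁¹ t^(2ℓ - j) (1 - t²)^(ν + j) dt`. Two recurrences for these Beta-type
integrals then give, for `j = 2M`,
`λ(n, ℓ, j) / λ(n, ℓ, 0) = ∏_{k < M} (ℓ - k) / (ℓ + ν + 3/2 + k)`,
and `1 - ∏ xₖ ≤ ∑ (1 - xₖ)` for `xₖ ∈ [0, 1]` bounds the left-hand side by
`∑_{k < M} (ν + 3/2 + 2k) / (ℓ + ν + 3/2) = M (M + ν + 1/2) / (ℓ + ν + 3/2)`.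
-/

open Set Polynomial Finset

noncomputable def betaMoment (r : ℕ) (b : ℝ) : ℝ :=
  ∫ t in (-1 : ℝ)..1, t ^ r * (1 - t ^ 2) ^ b

lemma continuous_one_sub_sq_rpow_s4 {b : ℝ} (hb : 0 ≤ b) :
    Continuous fun s : ℝ => (1 - s ^ 2) ^ b :=
  (continuous_const.sub (continuous_pow 2)).rpow_const fun _ => Or.inr hb

lemma one_sub_sq_pos_of_mem_Ioo {s : ℝ} (hs : s ∈ Ioo (-1 : ℝ) 1) : 0 < 1 - s ^ 2 := by
  obtain ⟨h1, h2⟩ := hs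
  nlinarith

lemma ae_mem_Ioo_of_mem_uIoc : ∀ᵐ x : ℝ, x ∈ uIoc (-1 : ℝ) 1 → x ∈ Ioo (-1 : ℝ) 1 := by
  filter_upwards [Measure.ae_ne volume (1 : ℝ)] with x hx hxm
  rw [uIoc_of_le (by norm_num)] at hxm
  exact ⟨hxm.1, hxm.2.lt_of_ne hx⟩

noncomputable def weightDeriv (b : ℝ) (P : ℝ[X]) : ℝ[X] :=
  (1 - X ^ 2) * derivative P - C (2 * b) * X * P

lemma hasDerivAt_eval_mul_one_sub_sq_rpow_s4 (P : ℝ[X]) (b : ℝ) {s : ℝ} (hs : 0 < 1 - s ^ 2) :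
    HasDerivAt (fun t : ℝ => P.eval t * (1 - t ^ 2) ^ b)
      ((weightDeriv b P).eval s * (1 - s ^ 2) ^ (b - 1)) s := by
  have hbase : HasDerivAt (fun t : ℝ => 1 - t ^ 2) (-(2 * s)) s := by
    simpa using (hasDerivAt_pow 2 s).const_sub 1
  refine ((P.hasDerivAt s).mul (hbase.rpow_const (p := b) (Or.inl hs.ne'))).congr_deriv ?_
  have hsplit : (1 - s ^ 2) ^ b = (1 - s ^ 2) * (1 - s ^ 2) ^ (b - 1) := by
    conv_lhs => rw [← add_sub_cancel 1 b, Real.rpow_add hs, Real.rpow_one]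
  rw [hsplit, weightDeriv]
  simp only [eval_sub, eval_mul, eval_one, eval_pow, eval_X, eval_C]
  ring

noncomputable def rodriguesPoly (a : ℝ) : ℕ → ℝ[X]
  | 0 => 1
  | m + 1 => weightDeriv (a - m) (rodriguesPoly a m)

lemma iteratedDeriv_one_sub_sq_rpow (a : ℝ) (m : ℕ) {s : ℝ} (hs : s ∈ Ioo (-1 : ℝ) 1) :
    iteratedDeriv m (fun t : ℝ => (1 - t ^ 2) ^ a) s
      = (rodriguesPoly a m).eval s * (1 - s ^ 2) ^ (a - m) := by
  induction m generalizing s with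
  | zero => simp [rodriguesPoly]
  | succ m ih =>
    have hev : iteratedDeriv m (fun t : ℝ => (1 - t ^ 2) ^ a)
        =ᶠ[nhds s] fun t => (rodriguesPoly a m).eval t * (1 - t ^ 2) ^ (a - m) := by
      filter_upwards [isOpen_Ioo.mem_nhds hs] with x hx using ih hx
    rw [iteratedDeriv_succ, hev.deriv_eq,
      (hasDerivAt_eval_mul_one_sub_sq_rpow_s4 _ _ (one_sub_sq_pos_of_mem_Ioo hs)).deriv,
      rodriguesPoly]
    push_cast
    ring_nf

/-- Integration by parts; the boundary terms vanish because `(1 - t²)^b = 0` at `t = ±1`. -/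
lemma integral_pow_mul_weightDeriv (P : ℝ[X]) {b : ℝ} (hb : 1 ≤ b) (r : ℕ) :
    ∫ t in (-1 : ℝ)..1, t ^ (r + 1) * ((weightDeriv b P).eval t * (1 - t ^ 2) ^ (b - 1))
      = -((r : ℝ) + 1) * ∫ t in (-1 : ℝ)..1, t ^ r * (P.eval t * (1 - t ^ 2) ^ b) := by
  have hv : Continuous fun t : ℝ => P.eval t * (1 - t ^ 2) ^ b :=
    P.continuous.mul (continuous_one_sub_sq_rpow_s4 (by linarith))
  have hv' : Continuous fun t : ℝ => (weightDeriv b P).eval t * (1 - t ^ 2) ^ (b - 1) :=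
    (weightDeriv b P).continuous.mul (continuous_one_sub_sq_rpow_s4 (by linarith))
  have hibp := intervalIntegral.integral_mul_deriv_eq_deriv_mul_of_hasDerivAt
    (a := -1) (b := 1) (u := fun t : ℝ => t ^ (r + 1)) (u' := fun t => ((r : ℝ) + 1) * t ^ r)
    (continuous_pow _).continuousOn hv.continuousOn
    (fun x _ => by simpa using hasDerivAt_pow (r + 1) x)
    (fun x hx => hasDerivAt_eval_mul_one_sub_sq_rpow_s4 P b (one_sub_sq_pos_of_mem_Ioo
      (by rwa [min_eq_left (by norm_num), max_eq_right (by norm_num)] at hx)))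
    ((continuous_const.mul (continuous_pow r)).intervalIntegrable _ _)
    (hv'.intervalIntegrable _ _)
  have hvanish : ∀ s : ℝ, 1 - s ^ 2 = 0 → P.eval s * (1 - s ^ 2) ^ b = 0 := fun s hs => by
    rw [hs, Real.zero_rpow (by linarith), mul_zero]
  rw [hibp, hvanish 1 (by norm_num), hvanish (-1) (by norm_num),
    ← intervalIntegral.integral_const_mul]
  simp only [mul_zero, sub_zero, zero_sub, ← intervalIntegral.integral_neg, neg_mul, mul_assoc]

lemma integral_pow_mul_rodriguesPoly (a : ℝ) (r : ℕ) {m : ℕ} (hm : (m : ℝ) ≤ a) :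
    ∫ t in (-1 : ℝ)..1, t ^ (r + m) * ((rodriguesPoly a m).eval t * (1 - t ^ 2) ^ (a - m))
      = (-1) ^ m * (∏ i ∈ range m, ((r : ℝ) + m - i)) * betaMoment r a := by
  induction m with
  | zero => simp [rodriguesPoly, betaMoment]
  | succ m ih =>
    have hibp := integral_pow_mul_weightDeriv (rodriguesPoly a m)
      (b := a - m) (by push_cast at hm; linarith) (r + m)
    rw [sub_sub, ← Nat.cast_add_one, ← rodriguesPoly] at hibp
    rw [← add_assoc, hibp, ih (by push_cast at hm; linarith), prod_range_succ']
    have hshift : ∏ i ∈ range m, ((r : ℝ) + ↑(m + 1) - ↑(i + 1))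
        = ∏ i ∈ range m, ((r : ℝ) + m - i) :=
      prod_congr rfl fun i _ => by push_cast; ring
    rw [hshift]
    push_cast
    ring

lemma betaMoment_add_two (r : ℕ) {b : ℝ} (hb : 0 ≤ b) :
    2 * (b + 1) * betaMoment (r + 2) b = ((r : ℝ) + 1) * betaMoment r (b + 1) := by
  have hibp := integral_pow_mul_weightDeriv 1 (b := b + 1) (by linarith) r
  simp only [weightDeriv, derivative_one, mul_zero, zero_sub, mul_one, eval_neg, eval_mul,
    eval_C, eval_X, eval_one, one_mul, add_sub_cancel_right] at hibp
  rw [betaMoment, betaMoment, ← intervalIntegral.integral_const_mul, ← neg_inj, ← neg_mul, ← hibp,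
    ← intervalIntegral.integral_neg]
  congr 1
  ext t
  ring

lemma betaMoment_add_one (r : ℕ) {b : ℝ} (hb : 0 ≤ b) :
    betaMoment r (b + 1) = betaMoment r b - betaMoment (r + 2) b := by
  have hint : ∀ k : ℕ, IntervalIntegrable (fun t : ℝ => t ^ k * (1 - t ^ 2) ^ b) volume (-1) 1 :=
    fun k => ((continuous_pow k).mul (continuous_one_sub_sq_rpow_s4 hb)).intervalIntegrable _ _
  rw [betaMoment, betaMoment, betaMoment, ← intervalIntegral.integral_sub (hint r) (hint (r + 2))]
  refine intervalIntegral.integral_congr_ae ?_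
  filter_upwards [ae_mem_Ioo_of_mem_uIoc] with x hx hxm
  rw [Real.rpow_add_one (one_sub_sq_pos_of_mem_Ioo (hx hxm)).ne']
  ring

lemma betaMoment_add_two_eq (r : ℕ) {c : ℝ} (hc : 0 ≤ c) :
    4 * (c + 1) * (c + 2) * betaMoment (r + 2) c
      = ((r : ℝ) + 1) * (r + 2 * c + 5) * betaMoment r (c + 2) := by
  have h₀ := betaMoment_add_two r hc
  have h₁ := betaMoment_add_two r (b := c + 1) (by linarith)
  have hsplit := betaMoment_add_one r (b := c + 1) (by linarith)
  rw [add_assoc, one_add_one_eq_two] at h₁ hsplit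
  linear_combination 2 * (c + 2) * h₀ + ((r : ℝ) + 1) * h₁ - 2 * (c + 2) * ((r : ℝ) + 1) * hsplit

lemma betaMoment_pos (m : ℕ) {b : ℝ} (hb : 0 ≤ b) : 0 < betaMoment (2 * m) b := by
  have hc : Continuous fun t : ℝ => t ^ (2 * m) * (1 - t ^ 2) ^ b :=
    (continuous_pow _).mul (continuous_one_sub_sq_rpow_s4 hb)
  rw [betaMoment, ← intervalIntegral.integral_add_adjacent_intervals
    (hc.intervalIntegrable (-1) 0) (hc.intervalIntegrable 0 1)]
  have hleft : 0 ≤ ∫ t in (-1 : ℝ)..0, t ^ (2 * m) * (1 - t ^ 2) ^ b := by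
    refine intervalIntegral.integral_nonneg (by norm_num) fun u ⟨hu₁, hu₂⟩ => ?_
    have : 0 ≤ 1 - u ^ 2 := by nlinarith
    rw [pow_mul]
    positivity
  have hright : 0 < ∫ t in (0 : ℝ)..1, t ^ (2 * m) * (1 - t ^ 2) ^ b := by
    refine intervalIntegral.intervalIntegral_pos_of_pos_on (hc.intervalIntegrable _ _)
      (fun x ⟨hx₀, hx₁⟩ => ?_) (by norm_num)
    have : 0 < 1 - x ^ 2 := by nlinarith
    positivity
  linarith

lemma Real.Gamma_add_nat_eq_prod_mul {x : ℝ} (hx : ∀ k : ℕ, x ≠ -k) (n : ℕ) :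
    Real.Gamma (x + n) = (∏ i ∈ range n, (x + i)) * Real.Gamma x := by
  induction n with
  | zero => simp
  | succ n ih =>
    have hne : x + n ≠ 0 := fun h => hx n (by linarith)
    rw [Nat.cast_succ, ← add_assoc, Real.Gamma_add_one hne, ih, prod_range_succ]
    ring

/-- The closed form of `λ(2c + 3, ℓ, j)`. -/
noncomputable def funkHeckeCoeff (c : ℝ) (ℓ j : ℕ) : ℝ :=
  (∏ i ∈ range j, (2 * (ℓ : ℝ) - i)) / (2 ^ j * ∏ i ∈ range j, (c + 1 + i))
    * betaMoment (2 * ℓ - j) (c + j)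

/-- Rodrigues' formula turns `λ(n, ℓ, j)` into `j` integrations by parts. -/
lemma lamFH_eq_funkHeckeCoeff {n : ℕ} (hn : 3 ≤ n) {ℓ j : ℕ} (hj : j ≤ 2 * ℓ) :
    lamFH n ℓ j = funkHeckeCoeff (((n : ℝ) - 3) / 2) ℓ j := by
  set ν : ℝ := ((n : ℝ) - 3) / 2 with hν
  have hν₀ : 0 ≤ ν := by
    rw [hν]
    linarith [show (3 : ℝ) ≤ n by exact_mod_cast hn]
  have hΓ : Real.Gamma ((j : ℝ) + ((n : ℝ) - 1) / 2)
      = (∏ i ∈ range j, (ν + 1 + i)) * Real.Gamma (((n : ℝ) - 1) / 2) := by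
    rw [show ((n : ℝ) - 1) / 2 = ν + 1 by rw [hν]; ring, add_comm]
    exact Real.Gamma_add_nat_eq_prod_mul (fun k h => by
      linarith [show (0 : ℝ) ≤ k from k.cast_nonneg]) j
  have hintegrand : lamFH n ℓ j = (-(1 : ℝ) / 2) ^ j
      * (Real.Gamma (((n : ℝ) - 1) / 2) / Real.Gamma ((j : ℝ) + ((n : ℝ) - 1) / 2))
      * ∫ t in (-1 : ℝ)..1, t ^ (2 * ℓ - j + j)
          * ((rodriguesPoly (j + ν) j).eval t * (1 - t ^ 2) ^ (j + ν - j)) := by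
    rw [lamFH, ← intervalIntegral.integral_const_mul]
    refine intervalIntegral.integral_congr_ae ?_
    filter_upwards [ae_mem_Ioo_of_mem_uIoc] with t ht htm
    have hpos := one_sub_sq_pos_of_mem_Ioo (ht htm)
    have hcancel : (1 - t ^ 2) ^ (-ν) * (1 - t ^ 2) ^ ν = 1 := by
      rw [← Real.rpow_add hpos, neg_add_cancel, Real.rpow_zero]
    rw [gegenbauerP, ← hν, iteratedDeriv_one_sub_sq_rpow _ _ (ht htm), Nat.sub_add_cancel hj]
    linear_combination (-(1 : ℝ) / 2) ^ j
      * (Real.Gamma (((n : ℝ) - 1) / 2) / Real.Gamma ((j : ℝ) + ((n : ℝ) - 1) / 2))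
      * t ^ (2 * ℓ) * ((rodriguesPoly (j + ν) j).eval t * (1 - t ^ 2) ^ (j + ν - j)) * hcancel
  have hfalling : ∏ i ∈ range j, (((2 * ℓ - j : ℕ) : ℝ) + j - i)
      = ∏ i ∈ range j, (2 * (ℓ : ℝ) - i) :=
    prod_congr rfl fun i _ => by push_cast [Nat.cast_sub hj]; ring
  have hsign : (-(1 : ℝ) / 2) ^ j * (-1) ^ j * 2 ^ j = 1 := by
    rw [← mul_pow, ← mul_pow]
    norm_num
  have hΓpos : 0 < Real.Gamma (((n : ℝ) - 1) / 2) :=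
    Real.Gamma_pos_of_pos (by rw [show ((n : ℝ) - 1) / 2 = ν + 1 by rw [hν]; ring]; linarith)
  rw [hintegrand, integral_pow_mul_rodriguesPoly _ _ (by linarith), hfalling, hΓ, funkHeckeCoeff,
    add_comm (j : ℝ) ν]
  field_simp
  linear_combination (∏ i ∈ range j, (2 * (ℓ : ℝ) - i)) * betaMoment (2 * ℓ - j) (ν + j) * hsign

lemma funkHeckeCoeff_two_mul_succ {c : ℝ} (hc : 0 ≤ c) {ℓ M : ℕ} (hM : M < ℓ) :
    funkHeckeCoeff c ℓ (2 * (M + 1))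
      = funkHeckeCoeff c ℓ (2 * M) * ((ℓ - M) / (ℓ + c + 3 / 2 + M)) := by
  obtain ⟨r, hr⟩ : ∃ r, 2 * ℓ - 2 * M = r + 2 := ⟨2 * ℓ - 2 * M - 2, by omega⟩
  have hr' : 2 * ℓ - 2 * (M + 1) = r := by omega
  have hrℓ : (r : ℝ) = 2 * ℓ - 2 * M - 2 := by
    rw [sub_sub, eq_sub_iff_add_eq]
    exact_mod_cast (by omega : r + (2 * M + 2) = 2 * ℓ)
  have key := betaMoment_add_two_eq r (c := c + 2 * M) (by positivity)
  unfold funkHeckeCoeff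
  rw [hr, hr', show 2 * (M + 1) = 2 * M + 1 + 1 by ring, prod_range_succ, prod_range_succ,
    prod_range_succ, prod_range_succ]
  push_cast
  rw [show c + (2 * M + 1 + 1) = c + 2 * M + 2 by ring]
  field_simp
  rw [hrℓ] at key
  linear_combination (-(∏ i ∈ range (2 * M), (2 * (ℓ : ℝ) - i)) * (ℓ - M) * 2 ^ (2 * M)) * key

lemma funkHeckeCoeff_two_mul {c : ℝ} (hc : 0 ≤ c) {ℓ M : ℕ} (hM : M ≤ ℓ) :
    funkHeckeCoeff c ℓ (2 * M)
      = betaMoment (2 * ℓ) c * ∏ k ∈ range M, ((ℓ - k) / (ℓ + c + 3 / 2 + k)) := by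
  induction M with
  | zero => simp [funkHeckeCoeff]
  | succ M ih =>
    rw [funkHeckeCoeff_two_mul_succ hc hM, ih (by omega), prod_range_succ, mul_assoc]

lemma Finset.one_sub_prod_le_sum_one_sub {ι R : Type*} [CommRing R] [LinearOrder R]
    [IsStrictOrderedRing R] (s : Finset ι) {f : ι → R} (h₀ : ∀ i ∈ s, 0 ≤ f i)
    (h₁ : ∀ i ∈ s, f i ≤ 1) :
    1 - ∏ i ∈ s, f i ≤ ∑ i ∈ s, (1 - f i) := by
  induction s using Finset.cons_induction with
  | empty => simp
  | cons a s _ ih =>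
    rw [prod_cons, sum_cons]
    have hs₀ : ∀ i ∈ s, 0 ≤ f i := fun i hi => h₀ i (mem_cons_of_mem hi)
    have hs₁ : ∀ i ∈ s, f i ≤ 1 := fun i hi => h₁ i (mem_cons_of_mem hi)
    have hprod₁ : ∏ i ∈ s, f i ≤ 1 := prod_le_one hs₀ hs₁
    have ha₁ := h₁ a (mem_cons_self a s)
    nlinarith [ih hs₀ hs₁]

lemma one_sub_prod_div_le {ℓ M : ℕ} (hM : M ≤ ℓ) {d : ℝ} (hd : 0 < d) :
    1 - ∏ k ∈ range M, ((ℓ - k) / (ℓ + d + k) : ℝ) ≤ M * (d + M - 1) / (ℓ + d) := by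
  have hterm : ∀ k ∈ range M, 1 - ((ℓ - k) / (ℓ + d + k) : ℝ) ≤ (d + 2 * k) / (ℓ + d) := by
    intro k _
    rw [one_sub_div (by positivity), show (ℓ : ℝ) + d + k - (ℓ - k) = d + 2 * k by ring]
    exact div_le_div_of_nonneg_left (by positivity) (by positivity) (by simp)
  have hsum : ∀ N : ℕ, ∑ k ∈ range N, (d + 2 * k) = N * (d + N - 1) := by
    intro N
    induction N with
    | zero => simp
    | succ N ih =>
      rw [sum_range_succ, ih]
      push_cast
      ring
  calc 1 - ∏ k ∈ range M, ((ℓ - k) / (ℓ + d + k) : ℝ)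
      ≤ ∑ k ∈ range M, (1 - (ℓ - k) / (ℓ + d + k)) := by
        refine one_sub_prod_le_sum_one_sub _ (fun k hk => ?_) (fun k _ => ?_)
        · have : (k : ℝ) ≤ ℓ := by exact_mod_cast (mem_range.1 hk).le.trans hM
          exact div_nonneg (by linarith) (by positivity)
        · exact div_le_one_of_le₀ (by linarith [k.cast_nonneg (α := ℝ)]) (by positivity)
    _ ≤ ∑ k ∈ range M, (d + 2 * k) / (ℓ + d) := sum_le_sum hterm
    _ = M * (d + M - 1) / (ℓ + d) := by rw [← sum_div, hsum]

theorem stmt4_general (n ℓ j : ℕ) (hn : 3 ≤ n) (hj : Even j) (hjℓ : j ≤ 2 * ℓ) :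
    1 - lamFH n ℓ j / lamFH n ℓ 0 ≤
      (j : ℝ) * (((j : ℝ) + (n : ℝ)) / 2 - 1) / (2 * (ℓ : ℝ) + (n : ℝ)) := by
  obtain ⟨M, rfl⟩ := hj
  rw [← two_mul] at hjℓ ⊢
  set ν : ℝ := ((n : ℝ) - 3) / 2 with hν
  have hν₀ : 0 ≤ ν := by
    rw [hν]
    linarith [show (3 : ℝ) ≤ n by exact_mod_cast hn]
  have hlam₀ : lamFH n ℓ 0 = betaMoment (2 * ℓ) ν := by
    simpa using (lamFH_eq_funkHeckeCoeff hn (Nat.zero_le _)).trans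
      (funkHeckeCoeff_two_mul hν₀ (Nat.zero_le ℓ))
  rw [lamFH_eq_funkHeckeCoeff hn hjℓ, funkHeckeCoeff_two_mul hν₀ (by omega), hlam₀,
    mul_div_cancel_left₀ _ (betaMoment_pos ℓ hν₀).ne']
  calc 1 - ∏ k ∈ range M, ((ℓ - k) / (ℓ + ν + 3 / 2 + k) : ℝ)
      ≤ M * (ν + 3 / 2 + M - 1) / (ℓ + (ν + 3 / 2)) := by
        simpa only [add_assoc] using one_sub_prod_div_le (d := ν + 3 / 2) (by omega) (by linarith)
    _ = _ := by
      rw [hν, show ((n : ℝ) - 3) / 2 + 3 / 2 = n / 2 by ring]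
      push_cast
      field_simp
      ring

/-- For `n ≥ 3` and even `j` with `2 ≤ j ≤ 2ℓ`,
`1 - λ(n,ℓ,j)/λ(n,ℓ,0) ≤ j((j+n)/2 - 1)/(2ℓ+n)`. -/
theorem stmt4 (n ℓ j : ℕ) (hn : 3 ≤ n) (hj : Even j) (hj2 : 2 ≤ j) (hjℓ : j ≤ 2 * ℓ) :
    1 - lamFH n ℓ j / lamFH n ℓ 0 ≤
      (j : ℝ) * (((j : ℝ) + (n : ℝ)) / 2 - 1) / (2 * (ℓ : ℝ) + (n : ℝ)) :=
  stmt4_general n ℓ j hn hj hjℓ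
end

section
/- For natural numbers ℓ, j, n with n ≥ 3 and j even satisfying 2 ≤ j ≤ 2ℓ, if ε(j,ℓ,n) := 2j((j+n)/2 - 1)/(2ℓ+n) ≤ 1, then λ(n,ℓ,0)/λ(n,ℓ,j) - 1 ≤ ε(j,ℓ,n). -/
open MeasureTheory Real

/-!
Rodrigues' formula and `j` integrations by parts turn `λ(n,ℓ,j)` into
`2⁻ʲ Γ(ν)/Γ(j+ν) · (2ℓ)(2ℓ-1)⋯(2ℓ-j+1) · ∫₋₁¹ t^(2ℓ-j) (1-t²)^(j+(n-3)/2) dt` with `ν = (n-1)/2`;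
the boundary terms vanish because every derivative of `(1-t²)^β` of order `< β` keeps a factor
`1-t²`. Integrating by parts once more relates these moments and gives
`(2ℓ+n+j) λ(n,ℓ,j+2) = (2ℓ-j) λ(n,ℓ,j)`, so `λ(n,ℓ,2m)/λ(n,ℓ,0) = ∏_{i<m} (2ℓ-2i)/(2ℓ+n+2i)`.
By induction on `m` this product is at least `1-α` with `α = m(2m+n-2)/(2ℓ+n) = ε/2`,
and `1/(1-α) - 1 ≤ 2α` for `0 ≤ α ≤ 1/2`.
-/

open Polynomial

namespace FunkHecke

lemma half_sub_three_nonneg {n : ℕ} (hn : 3 ≤ n) : 0 ≤ ((n : ℝ) - 3) / 2 := by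
  have : (3 : ℝ) ≤ n := by exact_mod_cast hn
  linarith

noncomputable def weight (γ t : ℝ) : ℝ := (1 - t ^ 2) ^ γ

lemma continuous_weight {γ : ℝ} (hγ : 0 ≤ γ) : Continuous (weight γ) :=
  (continuous_const.sub (continuous_pow 2)).rpow_const fun _ => Or.inr hγ

lemma weight_eq_zero {γ : ℝ} (hγ : γ ≠ 0) {t : ℝ} (ht : t ^ 2 = 1) : weight γ t = 0 := by
  simp [weight, ht, zero_rpow hγ]

lemma weight_add_one {γ : ℝ} (hγ : γ + 1 ≠ 0) (t : ℝ) :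
    weight (γ + 1) t = weight γ t * (1 - t ^ 2) := by
  rcases eq_or_ne (1 - t ^ 2) 0 with h | h
  · simp [weight, h, zero_rpow hγ]
  · exact rpow_add_one h γ

lemma hasDerivAt_weight {γ : ℝ} (hγ : 0 ≤ γ) (t : ℝ) :
    HasDerivAt (weight (γ + 1)) ((γ + 1) * (-2 * t) * weight γ t) t := by
  have h := (hasDerivAt_rpow_const (x := 1 - t ^ 2) (p := γ + 1) (Or.inr (by linarith))).comp t
    ((hasDerivAt_pow 2 t).const_sub 1)
  refine h.congr_deriv ?_
  simp only [weight, add_sub_cancel_right]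
  push_cast
  ring

noncomputable def rodriguesPoly (β : ℝ) : ℕ → ℝ[X]
  | 0 => 1
  | k + 1 => derivative (rodriguesPoly β k) * (1 - X ^ 2) - C (2 * (β - k)) * X * rodriguesPoly β k

noncomputable def rodriguesTerm (β : ℝ) (k : ℕ) (t : ℝ) : ℝ :=
  (rodriguesPoly β k).eval t * weight (β - k) t

lemma rodriguesTerm_zero (β t : ℝ) : rodriguesTerm β 0 t = weight β t := by
  simp [rodriguesTerm, rodriguesPoly]

lemma hasDerivAt_rodriguesTerm {β : ℝ} {k : ℕ} (hk : (k : ℝ) + 1 ≤ β) (t : ℝ) :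
    HasDerivAt (rodriguesTerm β k) (rodriguesTerm β (k + 1) t) t := by
  have hγ : β - k = β - (k + 1 : ℕ) + 1 := by push_cast; ring
  unfold rodriguesTerm
  rw [hγ]
  refine (((rodriguesPoly β k).hasDerivAt t).mul
    (hasDerivAt_weight (by push_cast; linarith) t)).congr_deriv ?_
  rw [weight_add_one (by push_cast; linarith)]
  simp only [rodriguesPoly, eval_sub, eval_mul, eval_C, eval_X, eval_pow, eval_one]
  push_cast
  ring

lemma iteratedDeriv_weight {β : ℝ} {k : ℕ} (hk : (k : ℝ) ≤ β) :
    iteratedDeriv k (weight β) = rodriguesTerm β k := by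
  induction k with
  | zero => funext t; simp [rodriguesTerm_zero]
  | succ k ih =>
    rw [iteratedDeriv_succ, ih (by push_cast at hk; linarith)]
    funext t
    exact (hasDerivAt_rodriguesTerm (by push_cast at hk; linarith) t).deriv

lemma continuous_rodriguesTerm {β : ℝ} {k : ℕ} (hk : (k : ℝ) ≤ β) :
    Continuous (rodriguesTerm β k) :=
  (rodriguesPoly β k).continuous.mul (continuous_weight (by linarith))

lemma rodriguesTerm_eq_zero {β : ℝ} {k : ℕ} (hk : (k : ℝ) < β) {t : ℝ} (ht : t ^ 2 = 1) :
    rodriguesTerm β k t = 0 := by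
  rw [rodriguesTerm, weight_eq_zero (by linarith) ht, mul_zero]

lemma integral_pow_mul_rodriguesTerm_succ {β : ℝ} {k : ℕ} (hk : (k : ℝ) + 1 ≤ β) (N : ℕ) :
    ∫ t in (-1 : ℝ)..1, t ^ N * rodriguesTerm β (k + 1) t
      = -(N * ∫ t in (-1 : ℝ)..1, t ^ (N - 1) * rodriguesTerm β k t) := by
  have hibp := intervalIntegral.integral_mul_deriv_eq_deriv_mul (a := -1) (b := 1)
    (fun t _ => hasDerivAt_pow N t) (fun t _ => hasDerivAt_rodriguesTerm hk t)
    ((continuous_const.mul (continuous_pow _)).intervalIntegrable _ _)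
    ((continuous_rodriguesTerm (by push_cast; linarith)).intervalIntegrable _ _)
  rw [hibp, rodriguesTerm_eq_zero (by linarith) (by norm_num : (1 : ℝ) ^ 2 = 1),
    rodriguesTerm_eq_zero (by linarith) (by norm_num : (-1 : ℝ) ^ 2 = 1),
    ← intervalIntegral.integral_const_mul]
  simp only [mul_zero, sub_zero, zero_sub, mul_assoc]

lemma integral_pow_mul_rodriguesTerm {β : ℝ} (N k i : ℕ) (h : ((i + k : ℕ) : ℝ) ≤ β) :
    ∫ t in (-1 : ℝ)..1, t ^ N * rodriguesTerm β (i + k) t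
      = (-1) ^ k * N.descFactorial k * ∫ t in (-1 : ℝ)..1, t ^ (N - k) * rodriguesTerm β i t := by
  induction k generalizing i with
  | zero => simp
  | succ k ih =>
    rw [show i + (k + 1) = i + 1 + k by ring, ih (i + 1) (by push_cast at h ⊢; linarith),
      integral_pow_mul_rodriguesTerm_succ (by push_cast at h; linarith), Nat.sub_sub,
      Nat.descFactorial_succ, Nat.cast_mul]
    ring

noncomputable def moment (k : ℕ) (γ : ℝ) : ℝ := ∫ t in (-1 : ℝ)..1, t ^ k * weight γ t

lemma intervalIntegrable_pow_mul_weight (k : ℕ) {γ : ℝ} (hγ : 0 ≤ γ) :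
    IntervalIntegrable (fun t => t ^ k * weight γ t) volume (-1) 1 :=
  ((continuous_pow k).mul (continuous_weight hγ)).intervalIntegrable _ _

lemma moment_weight_add_one (k : ℕ) {γ : ℝ} (hγ : 0 ≤ γ) :
    moment k (γ + 1) = moment k γ - moment (k + 2) γ := by
  rw [moment, moment, moment, ← intervalIntegral.integral_sub
    (intervalIntegrable_pow_mul_weight _ hγ) (intervalIntegrable_pow_mul_weight _ hγ)]
  refine intervalIntegral.integral_congr fun t _ => ?_
  simp only [weight_add_one (by linarith : γ + 1 ≠ 0), pow_add]
  ring

lemma mul_moment_weight_add_one_eq (k : ℕ) {γ : ℝ} (hγ : 0 ≤ γ) :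
    (k + 1) * moment k (γ + 1) = (2 * γ + 2) * moment (k + 2) γ := by
  have hibp := intervalIntegral.integral_mul_deriv_eq_deriv_mul (a := -1) (b := 1)
    (fun t _ => hasDerivAt_pow (k + 1) t) (fun t _ => hasDerivAt_weight hγ t)
    ((continuous_const.mul (continuous_pow _)).intervalIntegrable _ _)
    (((continuous_const.mul (continuous_const.mul continuous_id)).mul
      (continuous_weight hγ)).intervalIntegrable _ _)
  simp only [weight_eq_zero (by linarith : γ + 1 ≠ 0) (by norm_num : (1 : ℝ) ^ 2 = 1),
    weight_eq_zero (by linarith : γ + 1 ≠ 0) (by norm_num : (-1 : ℝ) ^ 2 = 1), mul_zero, sub_zero,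
    zero_sub, add_tsub_cancel_right] at hibp
  have hleft : ∫ t in (-1 : ℝ)..1, t ^ (k + 1) * ((γ + 1) * (-2 * t) * weight γ t)
      = -((2 * γ + 2) * moment (k + 2) γ) := by
    rw [moment, ← intervalIntegral.integral_const_mul, ← intervalIntegral.integral_neg]
    exact intervalIntegral.integral_congr fun t _ => by ring
  have hright : ∫ t in (-1 : ℝ)..1, ((k + 1 : ℕ) : ℝ) * t ^ k * weight (γ + 1) t
      = (k + 1) * moment k (γ + 1) := by
    rw [moment, ← intervalIntegral.integral_const_mul]
    exact intervalIntegral.integral_congr fun t _ => by push_cast; ring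
  linarith

lemma mul_moment_pow_add_two (k : ℕ) {γ : ℝ} (hγ : 0 ≤ γ) :
    (k + 2 * γ + 3) * moment (k + 2) γ = (k + 1) * moment k γ := by
  linear_combination (k + 1 : ℝ) * moment_weight_add_one k hγ - mul_moment_weight_add_one_eq k hγ

lemma mul_moment_weight_add_one (k : ℕ) {γ : ℝ} (hγ : 0 ≤ γ) :
    (k + 2 * γ + 3) * moment k (γ + 1) = (2 * γ + 2) * moment k γ := by
  linear_combination (k + 2 * γ + 3) * moment_weight_add_one k hγ - mul_moment_pow_add_two k hγ

lemma moment_zero_pos {γ : ℝ} (hγ : 0 ≤ γ) : 0 < moment 0 γ :=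
  intervalIntegral.intervalIntegral_pos_of_pos_on (intervalIntegrable_pow_mul_weight 0 hγ)
    (fun t ht => by
      rw [pow_zero, one_mul]
      exact rpow_pos_of_pos (by nlinarith [ht.1, ht.2]) γ)
    (by norm_num)

lemma moment_two_mul_pos (m : ℕ) {γ : ℝ} (hγ : 0 ≤ γ) : 0 < moment (2 * m) γ := by
  induction m with
  | zero => exact moment_zero_pos hγ
  | succ m ih =>
    have h := mul_moment_pow_add_two (2 * m) hγ
    rw [show 2 * (m + 1) = 2 * m + 2 by ring]
    refine pos_of_mul_pos_right (a := ((2 * m : ℕ) : ℝ) + 2 * γ + 3) ?_ (by positivity)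
    rw [h]
    positivity

lemma gegenbauerP_mul_weight {n : ℕ} (hn : 3 ≤ n) (j : ℕ) {t : ℝ} (ht : t ^ 2 ≤ 1) :
    gegenbauerP n j t * (1 - t ^ 2) ^ (((n : ℝ) - 3) / 2)
      = (-(1 : ℝ) / 2) ^ j * (Gamma (((n : ℝ) - 1) / 2) / Gamma ((j : ℝ) + ((n : ℝ) - 1) / 2)) *
        rodriguesTerm ((j : ℝ) + ((n : ℝ) - 3) / 2) j t := by
  rw [gegenbauerP]
  set δ : ℝ := ((n : ℝ) - 3) / 2
  have hδ : 0 ≤ δ := half_sub_three_nonneg hn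
  have hrod : iteratedDeriv j (fun s : ℝ => (1 - s ^ 2) ^ ((j : ℝ) + δ)) t
      = rodriguesTerm ((j : ℝ) + δ) j t := by
    rw [show (fun s : ℝ => (1 - s ^ 2) ^ ((j : ℝ) + δ)) = weight ((j : ℝ) + δ) from rfl,
      iteratedDeriv_weight (by linarith)]
  rw [hrod]
  rcases (sub_nonneg.mpr ht).eq_or_lt with h | h
  · rcases hδ.eq_or_lt with h0 | h0
    · simp [← h0]
    · rw [rodriguesTerm_eq_zero (by linarith) (by linarith)]
      simp
  · rw [mul_right_comm, mul_assoc _ ((1 - t ^ 2) ^ (-δ)), ← rpow_add h, neg_add_cancel, rpow_zero,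
      mul_one]

theorem integral_pow_mul_gegenbauerP {n : ℕ} (hn : 3 ≤ n) (N j : ℕ) :
    ∫ t in (-1 : ℝ)..1, t ^ N * gegenbauerP n j t * (1 - t ^ 2) ^ (((n : ℝ) - 3) / 2)
      = (1 / 2) ^ j * (Gamma (((n : ℝ) - 1) / 2) / Gamma ((j : ℝ) + ((n : ℝ) - 1) / 2)) *
        N.descFactorial j * moment (N - j) ((j : ℝ) + ((n : ℝ) - 3) / 2) := by
  have hδ : (j : ℝ) ≤ (j : ℝ) + ((n : ℝ) - 3) / 2 := le_add_of_nonneg_right (half_sub_three_nonneg hn)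
  have hint : ∫ t in (-1 : ℝ)..1, t ^ N * gegenbauerP n j t * (1 - t ^ 2) ^ (((n : ℝ) - 3) / 2)
      = (-(1 : ℝ) / 2) ^ j * (Gamma (((n : ℝ) - 1) / 2) / Gamma ((j : ℝ) + ((n : ℝ) - 1) / 2)) *
        ∫ t in (-1 : ℝ)..1, t ^ N * rodriguesTerm ((j : ℝ) + ((n : ℝ) - 3) / 2) (0 + j) t := by
    rw [zero_add, ← intervalIntegral.integral_const_mul]
    refine intervalIntegral.integral_congr fun t ht => ?_
    have ht2 : t ^ 2 ≤ 1 := by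
      rw [Set.uIcc_of_le (by norm_num)] at ht
      nlinarith [ht.1, ht.2]
    simp only [mul_assoc, gegenbauerP_mul_weight hn j ht2]
    ring
  rw [hint, integral_pow_mul_rodriguesTerm N j 0 (by simpa using hδ), moment]
  have hsign : (-(1 : ℝ) / 2) ^ j * (-1) ^ j = (1 / 2) ^ j := by rw [← mul_pow]; norm_num
  simp only [rodriguesTerm_zero, ← hsign]
  ring

theorem lamFH_eq {n : ℕ} (hn : 3 ≤ n) (ℓ j : ℕ) :
    lamFH n ℓ j = (1 / 2) ^ j * (Gamma (((n : ℝ) - 1) / 2) / Gamma ((j : ℝ) + ((n : ℝ) - 1) / 2)) *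
        (2 * ℓ).descFactorial j * moment (2 * ℓ - j) ((j : ℝ) + ((n : ℝ) - 3) / 2) :=
  integral_pow_mul_gegenbauerP hn (2 * ℓ) j

theorem lamFH_zero {n : ℕ} (hn : 3 ≤ n) (ℓ : ℕ) : lamFH n ℓ 0 = moment (2 * ℓ) (((n : ℝ) - 3) / 2) := by
  have hΓ : Gamma (((n : ℝ) - 1) / 2) ≠ 0 := (Gamma_pos_of_pos (by
    have : (3 : ℝ) ≤ n := by exact_mod_cast hn
    linarith)).ne'
  simp [lamFH_eq hn, hΓ]

theorem lamFH_zero_pos {n : ℕ} (hn : 3 ≤ n) (ℓ : ℕ) : 0 < lamFH n ℓ 0 := by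
  rw [lamFH_zero hn]
  exact moment_two_mul_pos ℓ (half_sub_three_nonneg hn)

theorem lamFH_add_two {n ℓ j : ℕ} (hn : 3 ≤ n) (hj : j + 2 ≤ 2 * ℓ) :
    (2 * ℓ + n + j : ℝ) * lamFH n ℓ (j + 2) = (2 * ℓ - j : ℝ) * lamFH n ℓ j := by
  obtain ⟨k, hk⟩ : ∃ k, 2 * ℓ = k + 2 + j := ⟨2 * ℓ - j - 2, by omega⟩
  have hℓ : (2 * ℓ : ℝ) = k + 2 + j := by exact_mod_cast hk
  have hn' : (3 : ℝ) ≤ n := by exact_mod_cast hn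
  have hδ : 0 ≤ (j : ℝ) + ((n : ℝ) - 3) / 2 := by linarith
  have hν : 0 < (j : ℝ) + ((n : ℝ) - 1) / 2 := by linarith
  have hΓ : Gamma ((j : ℝ) + ((n : ℝ) - 1) / 2) ≠ 0 := (Gamma_pos_of_pos hν).ne'
  have hGamma : Gamma (((j + 2 : ℕ) : ℝ) + ((n : ℝ) - 1) / 2)
      = ((j : ℝ) + ((n : ℝ) - 1) / 2 + 1) * ((j : ℝ) + ((n : ℝ) - 1) / 2)
        * Gamma ((j : ℝ) + ((n : ℝ) - 1) / 2) := by
    rw [show ((j + 2 : ℕ) : ℝ) + ((n : ℝ) - 1) / 2 = (j : ℝ) + ((n : ℝ) - 1) / 2 + 1 + 1 by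
        push_cast; ring, Gamma_add_one (by linarith), Gamma_add_one hν.ne']
    ring
  have hdesc : ((2 * ℓ).descFactorial (j + 2) : ℝ) = (k + 2) * (k + 1) * (2 * ℓ).descFactorial j := by
    rw [Nat.descFactorial_succ, Nat.descFactorial_succ, hk]
    push_cast [show k + 2 + j - (j + 1) = k + 1 by omega, show k + 2 + j - j = k + 2 by omega]
    ring
  have hmoment := mul_moment_weight_add_one k (by linarith : 0 ≤ (j : ℝ) + ((n : ℝ) - 3) / 2 + 1)
  have hibp := mul_moment_weight_add_one_eq k hδ
  rw [lamFH_eq hn, lamFH_eq hn, hGamma, hdesc, hk,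
    show k + 2 + j - (j + 2) = k by omega, show k + 2 + j - j = k + 2 by omega,
    show ((j + 2 : ℕ) : ℝ) + ((n : ℝ) - 3) / 2 = (j : ℝ) + ((n : ℝ) - 3) / 2 + 1 + 1 by push_cast; ring, hℓ]
  generalize Gamma ((j : ℝ) + ((n : ℝ) - 1) / 2) = G at *
  generalize moment k ((j : ℝ) + ((n : ℝ) - 3) / 2 + 1 + 1) = X at *
  generalize moment (k + 2) ((j : ℝ) + ((n : ℝ) - 3) / 2) = W at *
  have hν2 : 2 * (j : ℝ) + ((n : ℝ) - 1) ≠ 0 := by linarith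
  have hν3 : 2 * (j : ℝ) + ((n : ℝ) - 1) + 2 ≠ 0 := by linarith
  field_simp
  linear_combination (k + 2) * (1 / 2 : ℝ) ^ j * Gamma (((n : ℝ) - 1) / 2) *
    ((k + 1) * hmoment + (2 * j + n + 1) * hibp)

theorem lamFH_lower_bound {n ℓ m : ℕ} (hn : 3 ≤ n) (hm : m ≤ ℓ) :
    (2 * ℓ + n - m * (2 * m + n - 2) : ℝ) * lamFH n ℓ 0 ≤ (2 * ℓ + n : ℝ) * lamFH n ℓ (2 * m) := by
  induction m with
  | zero => simp
  | succ m ih =>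
    have ih := ih (by omega)
    have hrec := lamFH_add_two hn (ℓ := ℓ) (j := 2 * m) (by omega)
    have hlam0 := (lamFH_zero_pos hn ℓ).le
    have hmℓ : (m + 1 : ℝ) ≤ ℓ := by exact_mod_cast hm
    have hpos : (0 : ℝ) < 2 * ℓ + n + 2 * m := by positivity
    rw [show 2 * (m + 1) = 2 * m + 2 by ring]
    push_cast at hrec ⊢
    refine le_of_mul_le_mul_left ?_ hpos
    -- with `D = 2ℓ+n`, `S = m(2m+n-2)`: `(2ℓ-2m)(D-S) - (D+2m)(D-S-n-4m) = (n+4m)(S+2m)`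
    nlinarith [mul_le_mul_of_nonneg_left ih (by linarith : (0 : ℝ) ≤ 2 * ℓ - 2 * m),
      mul_nonneg (mul_nonneg (by positivity : (0 : ℝ) ≤ n + 4 * m)
        (by nlinarith : (0 : ℝ) ≤ 2 * m + m * (2 * m + n - 2))) hlam0]

lemma div_sub_one_le_of_mul_le {a b ε : ℝ} (hb : 0 < b) (hε0 : 0 ≤ ε) (hε1 : ε ≤ 1)
    (h : (2 - ε) * b ≤ 2 * a) : b / a - 1 ≤ ε := by
  have ha : 0 < a := by nlinarith
  rw [div_sub_one ha.ne', div_le_iff₀ ha]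
  nlinarith [mul_le_mul_of_nonneg_left h (by linarith : 0 ≤ 1 + ε),
    mul_nonneg (mul_nonneg hε0 (sub_nonneg.mpr hε1)) hb.le]

end FunkHecke

theorem stmt5_general (n ℓ j : ℕ) (hn : 3 ≤ n) (hj : Even j) (hjℓ : j ≤ 2 * ℓ)
    (hε : 2 * (j : ℝ) * (((j : ℝ) + (n : ℝ)) / 2 - 1) / (2 * (ℓ : ℝ) + (n : ℝ)) ≤ 1) :
    lamFH n ℓ 0 / lamFH n ℓ j - 1 ≤
      2 * (j : ℝ) * (((j : ℝ) + (n : ℝ)) / 2 - 1) / (2 * (ℓ : ℝ) + (n : ℝ)) := by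
  obtain ⟨m, rfl⟩ := hj
  rw [← two_mul] at hjℓ hε ⊢
  have hn' : (3 : ℝ) ≤ n := by exact_mod_cast hn
  have hD : (0 : ℝ) < 2 * ℓ + n := by positivity
  have hm : (0 : ℝ) ≤ m := m.cast_nonneg
  have hε0 : 0 ≤ 2 * ((2 * m : ℕ) : ℝ) * ((((2 * m : ℕ) : ℝ) + n) / 2 - 1) / (2 * ℓ + n) := by
    push_cast
    exact div_nonneg (mul_nonneg (by linarith) (by linarith)) hD.le
  have hε' : 2 - 2 * ((2 * m : ℕ) : ℝ) * ((((2 * m : ℕ) : ℝ) + n) / 2 - 1) / (2 * ℓ + n)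
      = 2 * (2 * ℓ + n - m * (2 * m + n - 2)) / (2 * ℓ + n) := by
    push_cast
    field_simp
  refine FunkHecke.div_sub_one_le_of_mul_le (FunkHecke.lamFH_zero_pos hn ℓ) hε0 hε ?_
  rw [hε', div_mul_eq_mul_div, div_le_iff₀ hD]
  linarith [FunkHecke.lamFH_lower_bound hn (ℓ := ℓ) (m := m) (by omega)]

/-- For `n ≥ 3` and even `j` with `2 ≤ j ≤ 2ℓ`, if
`ε(j,ℓ,n) := 2j((j+n)/2 - 1)/(2ℓ+n) ≤ 1`, then `λ(n,ℓ,0)/λ(n,ℓ,j) - 1 ≤ ε(j,ℓ,n)`. -/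
theorem stmt5 (n ℓ j : ℕ) (hn : 3 ≤ n) (hj : Even j) (hj2 : 2 ≤ j) (hjℓ : j ≤ 2 * ℓ)
    (hε : 2 * (j : ℝ) * (((j : ℝ) + (n : ℝ)) / 2 - 1) / (2 * (ℓ : ℝ) + (n : ℝ)) ≤ 1) :
    lamFH n ℓ 0 / lamFH n ℓ j - 1 ≤
      2 * (j : ℝ) * (((j : ℝ) + (n : ℝ)) / 2 - 1) / (2 * (ℓ : ℝ) + (n : ℝ)) :=
  stmt5_general n ℓ j hn hj hjℓ hε
end

section
/- Every maximally symmetric matrix M on (ℝⁿ)^{⊗ℓ} admits a P-representation: there exists a square-integrable function P_M on S^{n-1} such that M = ∫_{S^{n-1}} P_M(x) |x⟩⟨x|^{⊗ℓ} dx. -/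
open MeasureTheory Real

/-- `ω_n = 2π^(n/2)/Γ(n/2)`, the surface area of the unit sphere `S^(n-1)`. -/
noncomputable def omegaS (n : ℕ) : ℝ := 2 * π ^ ((n : ℝ) / 2) / Real.Gamma ((n : ℝ) / 2)

/-- The unit sphere `S^(n-1) ⊆ ℝⁿ`. -/
def USph (n : ℕ) : Type := {x : Fin n → ℝ // ∑ i, x i ^ 2 = 1}

instance (n : ℕ) : MeasurableSpace (USph n) := by unfold USph; infer_instance

/-- The map on the sphere induced by a linear map preserving the quadratic form
(an orthogonal transformation). -/
def orthMap (n : ℕ) (g : (Fin n → ℝ) →ₗ[ℝ] (Fin n → ℝ))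
    (hg : ∀ x : Fin n → ℝ, ∑ i, g x i ^ 2 = ∑ i, x i ^ 2) : USph n → USph n :=
  fun x => ⟨g x.1, by rw [hg]; exact x.2⟩

/-- `f : S^(n-1) → ℝ` is a spherical harmonic of degree `j` if it is the restriction to
the sphere of a harmonic homogeneous polynomial of degree `j` on `ℝⁿ`. -/
def IsSphericalHarmonic (n j : ℕ) (f : USph n → ℝ) : Prop :=
  ∃ H : MvPolynomial (Fin n) ℝ, H.IsHomogeneous j ∧
    (∑ i : Fin n, MvPolynomial.pderiv i (MvPolynomial.pderiv i H)) = 0 ∧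
    ∀ x : USph n, f x = MvPolynomial.eval x.1 H

/-- The matrix `∫_{S^(n-1)} f(x) |x⟩⟨x|^{⊗ℓ} dμ(x)` on `(ℝⁿ)^{⊗ℓ}`. -/
noncomputable def SMat (n ℓ : ℕ) (μ : Measure (USph n)) (f : USph n → ℝ) :
    Matrix (Fin ℓ → Fin n) (Fin ℓ → Fin n) ℝ :=
  Matrix.of fun a b => ∫ x : USph n, f x * ((∏ i, x.1 (a i)) * (∏ i, x.1 (b i))) ∂μ

/-- A matrix `M` on `(ℝⁿ)^{⊗ℓ}` is maximally symmetric if its vectorization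
`|M⟩ ∈ (ℝⁿ)^{⊗2ℓ}` is invariant under all permutations of the `2ℓ` tensor factors. -/
def MaxSym (n ℓ : ℕ) (M : Matrix (Fin ℓ → Fin n) (Fin ℓ → Fin n) ℝ) : Prop :=
  ∀ (σ : Equiv.Perm (Fin ℓ ⊕ Fin ℓ)) (f : Fin ℓ ⊕ Fin ℓ → Fin n),
    M ((f ∘ σ) ∘ Sum.inl) ((f ∘ σ) ∘ Sum.inr) = M (f ∘ Sum.inl) (f ∘ Sum.inr)

/-!
The linear map `T N = ∫ Q_N(x) |x⟩⟨x|^{⊗ℓ} dμ(x)` preserves maximally symmetric matrices and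
satisfies `⟨N, T N⟩ = ∫ Q_N² dμ`. Since the orthogonal group acts transitively on the sphere,
an invariant probability measure charges every open set, so `T N = 0` forces the continuous
function `Q_N` to vanish on the sphere, hence on `ℝⁿ` by homogeneity, hence `N = 0` because a
symmetric tensor is determined by its polynomial. So `T` is injective, hence surjective, on the
finite-dimensional space of maximally symmetric matrices, and `M = T N` gives `P_M = Q_N`.
-/

open Finset

lemma Equiv.Perm.exists_comp_eq_of_card_fiber_eq {α β : Type*} [Fintype α] [DecidableEq β]
    (f f' : α → β) (h : ∀ i, Fintype.card {z // f z = i} = Fintype.card {z // f' z = i}) :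
    ∃ σ : Equiv.Perm α, f ∘ σ = f' := by
  have e : ∀ i, {z // f' z = i} ≃ {z // f z = i} := fun i => Fintype.equivOfCardEq (h i).symm
  refine ⟨(Equiv.sigmaFiberEquiv f').symm.trans
    ((Equiv.sigmaCongrRight e).trans (Equiv.sigmaFiberEquiv f)), funext fun z => ?_⟩
  exact (e (f' z) ⟨z, rfl⟩).2

lemma sum_single_one_apply {ι κ : Type*} [DecidableEq ι] [Fintype κ] (f : κ → ι) (i : ι) :
    (∑ z, Finsupp.single (f z) 1) i = Fintype.card {z // f z = i} := by
  simp [Finsupp.finsetSum_apply, Finsupp.single_apply, Fintype.card_subtype, eq_comm]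

/-- A symmetric tensor is determined by the polynomial `y ↦ ∑ f, T f * ∏ z, y (f z)`: the
coefficient of the monomial of `f₀` is `T f₀` times the size of its orbit under permutations. -/
theorem symmTensor_eq_zero_of_eval_eq_zero {K ι κ : Type*} [Field K] [CharZero K]
    [Fintype ι] [Fintype κ] [DecidableEq κ] (T : (κ → ι) → K)
    (hT : ∀ (σ : Equiv.Perm κ) f, T (f ∘ σ) = T f)
    (h : ∀ y : ι → K, ∑ f, T f * ∏ z, y (f z) = 0) : T = 0 := by
  classical
  let deg : (κ → ι) → ι →₀ ℕ := fun f => ∑ z, Finsupp.single (f z) 1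
  let p : MvPolynomial ι K := ∑ f, MvPolynomial.C (T f) * ∏ z, MvPolynomial.X (f z)
  have hp : p = 0 := MvPolynomial.funext fun y => by simp [p, h y]
  have hmonomial : ∀ f, MvPolynomial.C (T f) * ∏ z, MvPolynomial.X (f z) =
      MvPolynomial.monomial (deg f) (T f) := fun f => by
    simp only [deg, MvPolynomial.X, ← MvPolynomial.monomial_sum_one, MvPolynomial.C_mul_monomial,
      mul_one]
  funext f₀
  have hfiber : ∀ f, deg f = deg f₀ → T f = T f₀ := fun f hf => by
    obtain ⟨σ, rfl⟩ := Equiv.Perm.exists_comp_eq_of_card_fiber_eq f₀ f fun i => by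
      simpa only [deg, sum_single_one_apply] using congrArg (· i) hf.symm
    exact hT σ f₀
  have hcoeff : MvPolynomial.coeff (deg f₀) p = (#{f | deg f = deg f₀} : K) * T f₀ := by
    simp only [p, hmonomial, MvPolynomial.coeff_sum, MvPolynomial.coeff_monomial, ← sum_filter]
    rw [sum_congr rfl fun f hf => hfiber f (mem_filter.mp hf).2, sum_const, nsmul_eq_mul]
  have hcard : (#{f | deg f = deg f₀} : K) ≠ 0 :=
    Nat.cast_ne_zero.mpr (card_ne_zero_of_mem (mem_filter.mpr ⟨mem_univ _, rfl⟩))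
  simpa [hp, hcard] using hcoeff.symm

/-- The Q-function `Q_M(y) = ⟨y|^{⊗ℓ} M |y⟩^{⊗ℓ}`, a form of degree `2ℓ` on `ℝⁿ`. -/
noncomputable def qFun {n ℓ : ℕ} (M : Matrix (Fin ℓ → Fin n) (Fin ℓ → Fin n) ℝ)
    (y : Fin n → ℝ) : ℝ :=
  ∑ a, ∑ b, M a b * ((∏ i, y (a i)) * (∏ i, y (b i)))

section QFun

variable {n ℓ : ℕ} (M N : Matrix (Fin ℓ → Fin n) (Fin ℓ → Fin n) ℝ)

lemma qFun_add : qFun (M + N) = qFun M + qFun N := by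
  funext y
  simp only [qFun, Matrix.add_apply, add_mul, sum_add_distrib, Pi.add_apply]

lemma qFun_smul (c : ℝ) : qFun (c • M) = c • qFun M := by
  funext y
  simp only [qFun, Matrix.smul_apply, smul_eq_mul, mul_assoc, ← mul_sum, Pi.smul_apply]

lemma qFun_apply_smul (t : ℝ) (y : Fin n → ℝ) : qFun M (t • y) = t ^ (2 * ℓ) * qFun M y := by
  simp only [qFun, mul_sum, Pi.smul_apply, smul_eq_mul, prod_mul_distrib, prod_const, card_univ,
    Fintype.card_fin]
  exact sum_congr rfl fun a _ => sum_congr rfl fun b _ => by ring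

@[fun_prop]
lemma continuous_qFun : Continuous (qFun M) := by
  unfold qFun; fun_prop

lemma qFun_eq_sum_sumElim (y : Fin n → ℝ) :
    qFun M y = ∑ f : Fin ℓ ⊕ Fin ℓ → Fin n, M (f ∘ Sum.inl) (f ∘ Sum.inr) * ∏ z, y (f z) := by
  rw [← (Equiv.sumArrowEquivProdArrow _ _ _).symm.sum_comp, Fintype.sum_prod_type]
  simp [qFun, Fintype.prod_sum_type, Equiv.sumArrowEquivProdArrow]

lemma MaxSym.eq_zero_of_qFun_eq_zero {M : Matrix (Fin ℓ → Fin n) (Fin ℓ → Fin n) ℝ}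
    (hM : MaxSym n ℓ M) (h : ∀ y, qFun M y = 0) : M = 0 := by
  have hT := symmTensor_eq_zero_of_eval_eq_zero (fun f => M (f ∘ Sum.inl) (f ∘ Sum.inr))
    (fun σ f => hM σ f) fun y => by rw [← qFun_eq_sum_sumElim, h]
  ext a b
  simpa using congrFun hT (Sum.elim a b)

end QFun

lemma abs_le_one_of_sum_sq_eq_one {ι : Type*} [Fintype ι] {y : ι → ℝ}
    (hy : ∑ i, y i ^ 2 = 1) (i : ι) : |y i| ≤ 1 := by
  rw [← sq_le_one_iff_abs_le_one, ← hy]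
  exact single_le_sum (fun j _ => sq_nonneg (y j)) (mem_univ i)

namespace USph

instance (n : ℕ) : MetricSpace (USph n) := by unfold USph; infer_instance

instance (n : ℕ) : BorelSpace (USph n) := by unfold USph; infer_instance

@[fun_prop]
lemma continuous_apply {n : ℕ} (i : Fin n) : Continuous fun x : USph n => x.1 i :=
  (_root_.continuous_apply i).comp continuous_subtype_val

instance (n : ℕ) : CompactSpace (USph n) := by
  refine isCompact_iff_compactSpace.mp <| Metric.isCompact_of_isClosed_isBounded
    (isClosed_eq (by fun_prop) continuous_const) <|
      (Metric.isBounded_closedBall (x := 0) (r := 1)).subset fun x hx => ?_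
  simpa [pi_norm_le_iff_of_nonneg] using abs_le_one_of_sum_sq_eq_one hx

end USph

lemma qFun_eq_zero_of_eq_zero_on_sphere {n ℓ : ℕ} [Nonempty (USph n)]
    {M : Matrix (Fin ℓ → Fin n) (Fin ℓ → Fin n) ℝ} (h : ∀ x : USph n, qFun M x.1 = 0)
    (y : Fin n → ℝ) : qFun M y = 0 := by
  by_cases hy : y = 0
  · obtain ⟨x⟩ := ‹Nonempty (USph n)›
    simpa [hy, h x] using qFun_apply_smul M 0 x.1
  · set r := ‖WithLp.toLp 2 y‖
    have hr : r ≠ 0 := by simpa [r] using hy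
    have hunit : ∑ i, (r⁻¹ • y) i ^ 2 = 1 := by
      have hr2 : r ^ 2 = ∑ i, y i ^ 2 := by simp [r, EuclideanSpace.real_norm_sq_eq]
      simp only [Pi.smul_apply, smul_eq_mul, mul_pow, ← mul_sum, ← hr2]
      field_simp
    have := qFun_apply_smul M r (r⁻¹ • y)
    rwa [smul_inv_smul₀ hr, h ⟨_, hunit⟩, mul_zero] at this

/-- If `μ U = 0`, the finitely many translates of `U` covering the compact space are null too. -/
lemma MeasureTheory.Measure.isOpenPosMeasure_of_transitive {X ι : Type*} [TopologicalSpace X]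
    [CompactSpace X] [MeasurableSpace X] [OpensMeasurableSpace X] (μ : Measure X) [NeZero μ]
    (g : ι → X → X) (hcont : ∀ i, Continuous (g i)) (hμ : ∀ i, MeasurePreserving (g i) μ μ)
    (htrans : ∀ x y, ∃ i, g i x = y) : μ.IsOpenPosMeasure := by
  refine ⟨fun U hU ⟨x, hx⟩ hUμ => NeZero.ne μ ?_⟩
  choose i hi using fun y => htrans y x
  obtain ⟨t, ht⟩ := isCompact_univ.elim_finite_subcover (fun y => g (i y) ⁻¹' U)
    (fun y => hU.preimage (hcont _)) fun y _ => Set.mem_iUnion.mpr ⟨y, by simp [hi, hx]⟩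
  rw [← Measure.measure_univ_eq_zero]
  refine le_antisymm ((measure_mono ht).trans ((measure_biUnion_finset_le _ _).trans ?_)) zero_le
  simp [(hμ _).measure_preimage hU.measurableSet.nullMeasurableSet, hUμ]

lemma exists_orthMap_apply_eq {n : ℕ} (x y : USph n) :
    ∃ (g : (Fin n → ℝ) →ₗ[ℝ] (Fin n → ℝ))
      (hg : ∀ x : Fin n → ℝ, ∑ i, g x i ^ 2 = ∑ i, x i ^ 2), orthMap n g hg x = y := by
  let e := WithLp.linearEquiv 2 ℝ (Fin n → ℝ)
  let v := e.symm x.1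
  let w := e.symm y.1
  let r := Submodule.reflection (ℝ ∙ (v - w))ᗮ
  refine ⟨e.toLinearMap ∘ₗ r.toLinearMap ∘ₗ e.symm.toLinearMap, fun z => ?_, ?_⟩
  · have := EuclideanSpace.real_norm_sq_eq (r (e.symm z))
    rw [r.norm_map, EuclideanSpace.real_norm_sq_eq] at this
    exact this.symm
  · have hvw : ‖v‖ = ‖w‖ := by
      rw [← sq_eq_sq₀ (norm_nonneg _) (norm_nonneg _)]
      simp [EuclideanSpace.real_norm_sq_eq, v, w, e, x.2, y.2]
    apply Subtype.ext
    change e ((ℝ ∙ (v - w))ᗮ.reflection v) = y.1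
    rw [Submodule.reflection_sub hvw]
    exact e.apply_symm_apply y.1

lemma isOpenPosMeasure_of_orthMap_invariant {n : ℕ} (μ : Measure (USph n))
    [IsProbabilityMeasure μ]
    (hinv : ∀ (g : (Fin n → ℝ) →ₗ[ℝ] (Fin n → ℝ))
      (hg : ∀ x : Fin n → ℝ, ∑ i, g x i ^ 2 = ∑ i, x i ^ 2),
      Measure.map (orthMap n g hg) μ = μ) : μ.IsOpenPosMeasure := by
  let G := {g : (Fin n → ℝ) →ₗ[ℝ] (Fin n → ℝ) //
    ∀ x : Fin n → ℝ, ∑ i, g x i ^ 2 = ∑ i, x i ^ 2}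
  have hcont : ∀ g : G, Continuous (orthMap n g.1 g.2) := fun g =>
    (g.1.continuous_of_finiteDimensional.comp continuous_subtype_val).subtype_mk _
  refine Measure.isOpenPosMeasure_of_transitive μ (fun g : G => orthMap n g.1 g.2) hcont
    (fun g => ⟨(hcont g).measurable, hinv g.1 g.2⟩) fun x y => ?_
  obtain ⟨g, hg, h⟩ := exists_orthMap_apply_eq x y
  exact ⟨⟨g, hg⟩, h⟩

def maxSymSubmodule (n ℓ : ℕ) : Submodule ℝ (Matrix (Fin ℓ → Fin n) (Fin ℓ → Fin n) ℝ) where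
  carrier := {M | MaxSym n ℓ M}
  add_mem' hM hN σ f := by simp only [Matrix.add_apply, hM σ f, hN σ f]
  zero_mem' _ _ := rfl
  smul_mem' c M hM σ f := by simp only [Matrix.smul_apply, hM σ f]

lemma Continuous.integrable_of_compactSpace {X : Type*} [TopologicalSpace X] [CompactSpace X]
    [MeasurableSpace X] [OpensMeasurableSpace X] {f : X → ℝ} (hf : Continuous f)
    (μ : Measure X) [IsFiniteMeasure μ] : Integrable f μ :=
  hf.integrable_of_hasCompactSupport (.of_compactSpace f)

section PRepresentation

variable {n ℓ : ℕ} (μ : Measure (USph n))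

lemma prod_inl_mul_prod_inr_comp_perm {R : Type*} [CommMonoid R] (y : Fin n → R)
    (σ : Equiv.Perm (Fin ℓ ⊕ Fin ℓ)) (f : Fin ℓ ⊕ Fin ℓ → Fin n) :
    (∏ i, y (((f ∘ σ) ∘ Sum.inl) i)) * ∏ i, y (((f ∘ σ) ∘ Sum.inr) i) =
      (∏ i, y ((f ∘ Sum.inl) i)) * ∏ i, y ((f ∘ Sum.inr) i) := by
  simp only [Function.comp_apply, ← Fintype.prod_sum_type (fun z => y (f (σ z))),
    ← Fintype.prod_sum_type (fun z => y (f z))]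
  exact Equiv.prod_comp σ fun z => y (f z)

lemma maxSym_SMat (f : USph n → ℝ) : MaxSym n ℓ (SMat n ℓ μ f) := fun σ f₀ =>
  congrArg (integral μ) <| funext fun x =>
    congrArg (f x * ·) (prod_inl_mul_prod_inr_comp_perm x.1 σ f₀)

variable [IsFiniteMeasure μ]

lemma sum_mul_SMat {f : USph n → ℝ} (hf : Continuous f)
    (M : Matrix (Fin ℓ → Fin n) (Fin ℓ → Fin n) ℝ) :
    ∑ a, ∑ b, M a b * SMat n ℓ μ f a b = ∫ x, f x * qFun M x.1 ∂μ := by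
  simp only [SMat, Matrix.of_apply, qFun, mul_sum, ← integral_const_mul]
  rw [integral_finsetSum _ fun a _ => ?_]
  · refine sum_congr rfl fun a _ => ?_
    rw [integral_finsetSum _ fun b _ => ?_]
    · exact sum_congr rfl fun b _ => integral_congr_ae <| .of_forall fun x => by ring
    · exact (by fun_prop : Continuous _).integrable_of_compactSpace μ
  · exact (by fun_prop : Continuous _).integrable_of_compactSpace μ

noncomputable def qSMat : Matrix (Fin ℓ → Fin n) (Fin ℓ → Fin n) ℝ →ₗ[ℝ]
    Matrix (Fin ℓ → Fin n) (Fin ℓ → Fin n) ℝ where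
  toFun N := SMat n ℓ μ fun x => qFun N x.1
  map_add' N N' := by
    ext a b
    simp only [SMat, Matrix.of_apply, Matrix.add_apply, qFun_add, Pi.add_apply, add_mul]
    exact integral_add ((by fun_prop : Continuous _).integrable_of_compactSpace μ)
      ((by fun_prop : Continuous _).integrable_of_compactSpace μ)
  map_smul' c N := by
    ext a b
    simp only [SMat, Matrix.of_apply, Matrix.smul_apply, qFun_smul, Pi.smul_apply, smul_eq_mul,
      mul_assoc, integral_const_mul, RingHom.id_apply]

noncomputable def qSMatRestrict : maxSymSubmodule n ℓ →ₗ[ℝ] maxSymSubmodule n ℓ :=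
  (qSMat μ).restrict fun _ _ => maxSym_SMat μ _

/-- `⟨N, qSMat N⟩ = ∫ Q_N²`, and `μ` charges every open set of the sphere. -/
lemma qSMatRestrict_injective [Nonempty (USph n)] [μ.IsOpenPosMeasure] :
    Function.Injective (qSMatRestrict (ℓ := ℓ) μ) := by
  rw [injective_iff_map_eq_zero]
  rintro ⟨N, hN⟩ h0
  have hzero : qSMat μ N = 0 := congrArg Subtype.val h0
  have hint := sum_mul_SMat μ (f := fun x => qFun N x.1) (by fun_prop) N
  change ∑ a, ∑ b, N a b * qSMat μ N a b = _ at hint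
  simp only [hzero, Matrix.zero_apply, mul_zero, sum_const_zero] at hint
  have hsphere : ∀ x : USph n, qFun N x.1 = 0 := by
    by_contra! ⟨x₀, hx₀⟩
    exact (Continuous.integral_pos_of_hasCompactSupport_nonneg_nonzero (μ := μ)
      (f := fun x => qFun N x.1 * qFun N x.1) (by fun_prop) (.of_compactSpace _)
      (fun x => mul_self_nonneg _) (mul_self_ne_zero.mpr hx₀)).ne hint
  exact Subtype.ext (hN.eq_zero_of_qFun_eq_zero (qFun_eq_zero_of_eq_zero_on_sphere hsphere))

end PRepresentation

/-- Every maximally symmetric matrix `M` on `(ℝⁿ)^{⊗ℓ}` admits a P-representation: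
there is a square-integrable function `P_M` on `S^(n-1)` with
`M = ∫_{S^(n-1)} P_M(x) |x⟩⟨x|^{⊗ℓ} dx` (w.r.t. the uniform probability measure). -/
theorem stmt12 (n ℓ : ℕ)
    (μ : Measure (USph n)) [IsProbabilityMeasure μ]
    (hinv : ∀ (g : (Fin n → ℝ) →ₗ[ℝ] (Fin n → ℝ))
      (hg : ∀ x : Fin n → ℝ, ∑ i, g x i ^ 2 = ∑ i, x i ^ 2),
      Measure.map (orthMap n g hg) μ = μ)
    (M : Matrix (Fin ℓ → Fin n) (Fin ℓ → Fin n) ℝ) (hM : MaxSym n ℓ M) :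
    ∃ P : USph n → ℝ, MemLp P 2 μ ∧
      ∀ a b : Fin ℓ → Fin n,
        M a b = ∫ x : USph n, P x * ((∏ i, x.1 (a i)) * (∏ i, x.1 (b i))) ∂μ := by
  have := nonempty_of_isProbabilityMeasure μ
  have := isOpenPosMeasure_of_orthMap_invariant μ hinv
  obtain ⟨⟨N, _⟩, hN⟩ :=
    LinearMap.injective_iff_surjective.mp (qSMatRestrict_injective μ) ⟨M, hM⟩
  exact ⟨fun x => qFun N x.1, ContinuousMap.memLp μ ℝ ⟨fun x => qFun N x.1, by fun_prop⟩,
    fun a b => (congrFun (congrFun (congrArg Subtype.val hN) a) b).symm⟩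
end

section
/- Partial trace of symmetric number-state matrix elements: tracing out one tensor factor gives tr₁(|𝐢⟩⟨𝐣|) = (1/ℓ) Σ_{t=1}^{n} √(i_t j_t) |𝐢-e_t⟩⟨𝐣-e_t|, where 𝐢, 𝐣 are occupation vectors with |𝐢| = |𝐣| = ℓ. -/
open Finset

/-- The number-state basis vector `|𝐢⟩` of the symmetric subspace of `(ℂⁿ)^{⊗ℓ}`:
in the standard product basis of `(ℂⁿ)^{⊗ℓ}` (indexed by `f : Fin ℓ → Fin n`), its
coordinate at `f` is `√(𝐢!/ℓ!)` if `f` has occupation numbers `𝐢` and `0` otherwise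
(this is the coordinate form of `(1/√(ℓ!·𝐢!)) Σ_{π∈S_ℓ} π(|1⟩^{⊗i₁}⊗⋯⊗|n⟩^{⊗iₙ})`). -/
noncomputable def numberKet (n ℓ : ℕ) (I : Fin n → ℕ) : (Fin ℓ → Fin n) → ℂ :=
  fun f =>
    if ∀ t, (Finset.univ.filter fun i => f i = t).card = I t then
      ((Real.sqrt ((∏ t, Nat.factorial (I t) : ℕ) : ℝ) / Real.sqrt ((Nat.factorial ℓ : ℕ) : ℝ) : ℝ) : ℂ)
    else 0

/-- The matrix `|𝐢⟩⟨𝐣|` on `(ℂⁿ)^{⊗ℓ}`. -/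
noncomputable def numberMat (n ℓ : ℕ) (I J : Fin n → ℕ) :
    Matrix (Fin ℓ → Fin n) (Fin ℓ → Fin n) ℂ :=
  Matrix.of fun a b => numberKet n ℓ I a * (starRingEnd ℂ) (numberKet n ℓ J b)

/-- The partial trace over one tensor factor of `(ℂⁿ)^{⊗(ℓ+1)}`. -/
noncomputable def ptrOne (n ℓ : ℕ)
    (M : Matrix (Fin (ℓ + 1) → Fin n) (Fin (ℓ + 1) → Fin n) ℂ) :
    Matrix (Fin ℓ → Fin n) (Fin ℓ → Fin n) ℂ :=
  Matrix.of fun a b => ∑ t : Fin n, M (Fin.snoc a t) (Fin.snoc b t)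

lemma card_snoc (n ℓ : ℕ) (a : Fin ℓ → Fin n) (t u : Fin n) :
    (Finset.univ.filter fun i : Fin (ℓ+1) => (Fin.snoc a t : Fin (ℓ+1) → Fin n) i = u).card =
      (Finset.univ.filter fun i => a i = u).card + if t = u then 1 else 0 := by
  rw [Finset.card_filter, Finset.card_filter, Fin.sum_univ_castSucc]
  simp [Fin.snoc_castSucc, Fin.snoc_last]

lemma ket_snoc (n ℓ : ℕ) (I : Fin n → ℕ) (t : Fin n) (a : Fin ℓ → Fin n) :
    numberKet n (ℓ + 1) I (Fin.snoc a t) =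
      ((Real.sqrt (I t) / Real.sqrt ((ℓ : ℝ) + 1) : ℝ) : ℂ) *
        numberKet n ℓ (fun u => I u - if u = t then 1 else 0) a := by
  unfold numberKet
  by_cases h0 : I t = 0
  · rw [if_neg, h0]
    · simp
    · intro h
      have := h t
      rw [card_snoc, if_pos rfl, h0] at this
      omega
  · have hequiv : (∀ u, (Finset.univ.filter fun i : Fin (ℓ+1) =>
          (Fin.snoc a t : Fin (ℓ+1) → Fin n) i = u).card = I u)
        ↔ (∀ u, (Finset.univ.filter fun i => a i = u).card
            = I u - if u = t then 1 else 0) := by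
      constructor
      · intro h u
        have hu := h u
        rw [card_snoc] at hu
        rcases eq_or_ne u t with rfl | hne
        · simp at hu ⊢; omega
        · simp only [if_neg hne, if_neg (Ne.symm hne)] at hu ⊢; omega
      · intro h u
        have hu := h u
        rw [card_snoc]
        rcases eq_or_ne u t with rfl | hne
        · simp at hu ⊢; omega
        · simp only [if_neg hne, if_neg (Ne.symm hne)] at hu ⊢; omega
    by_cases hc : ∀ u, (Finset.univ.filter fun i => a i = u).card
        = I u - if u = t then 1 else 0
    · rw [if_pos (hequiv.mpr hc), if_pos hc, ← Complex.ofReal_mul,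
        Complex.ofReal_inj]
      have hprod : ∏ u, Nat.factorial (I u)
          = I t * ∏ u, Nat.factorial (I u - if u = t then 1 else 0) := by
        rw [← Finset.prod_erase_mul _ _ (Finset.mem_univ t),
          ← Finset.prod_erase_mul _ _ (Finset.mem_univ t)]
        have h1 : ∀ u ∈ Finset.univ.erase t,
            Nat.factorial (I u - if u = t then 1 else 0) = Nat.factorial (I u) := by
          intro u hu
          simp [Finset.ne_of_mem_erase hu]
        rw [Finset.prod_congr rfl h1, if_pos rfl]
        obtain ⟨k, hk⟩ := Nat.exists_eq_succ_of_ne_zero h0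
        rw [hk]
        simp [Nat.factorial_succ]
        ring
      have hR1 : ((∏ u, Nat.factorial (I u) : ℕ) : ℝ)
          = (I t : ℝ) * ((∏ u, Nat.factorial (I u - if u = t then 1 else 0) : ℕ) : ℝ) := by
        exact_mod_cast congrArg (Nat.cast : ℕ → ℝ) hprod
      have hR2 : ((Nat.factorial (ℓ + 1) : ℕ) : ℝ)
          = ((ℓ : ℝ) + 1) * ((Nat.factorial ℓ : ℕ) : ℝ) := by
        push_cast [Nat.factorial_succ]; ring
      rw [hR1, hR2, Real.sqrt_mul (Nat.cast_nonneg _),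
        Real.sqrt_mul (by positivity)]
      ring
    · rw [if_neg (fun h => hc (hequiv.mp h)), if_neg hc, mul_zero]

/-- Partial trace of symmetric number-state matrix elements: tracing out one tensor
factor gives `tr₁(|𝐢⟩⟨𝐣|) = (1/ℓ) Σ_{t} √(i_t j_t) |𝐢-e_t⟩⟨𝐣-e_t|` for occupation
vectors with `|𝐢| = |𝐣| = ℓ` (here `ℓ = ℓ' + 1` tensor factors). -/
theorem stmt17 (n ℓ' : ℕ) (I J : Fin n → ℕ)
    (hI : ∑ t, I t = ℓ' + 1) (hJ : ∑ t, J t = ℓ' + 1) :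
    ptrOne n ℓ' (numberMat n (ℓ' + 1) I J) =
      (1 / ((ℓ' : ℂ) + 1)) •
        ∑ t : Fin n,
          ((Real.sqrt ((I t : ℝ) * (J t : ℝ)) : ℝ) : ℂ) •
            numberMat n ℓ' (fun u => I u - if u = t then 1 else 0)
              (fun u => J u - if u = t then 1 else 0) := by
  ext a b
  simp only [ptrOne, numberMat, Matrix.of_apply, Matrix.smul_apply, Matrix.sum_apply,
    smul_eq_mul, Finset.mul_sum]
  refine Finset.sum_congr rfl fun t _ => ?_
  rw [ket_snoc, ket_snoc, map_mul, Complex.conj_ofReal]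
  have key : ((Real.sqrt (I t) / Real.sqrt ((ℓ' : ℝ) + 1) : ℝ) : ℂ) *
      ((Real.sqrt (J t) / Real.sqrt ((ℓ' : ℝ) + 1) : ℝ) : ℂ) =
      (1 / ((ℓ' : ℂ) + 1)) * ((Real.sqrt ((I t : ℝ) * (J t : ℝ)) : ℝ) : ℂ) := by
    rw [← Complex.ofReal_mul, Real.sqrt_mul (Nat.cast_nonneg _)]
    have h1 : (Real.sqrt (I t) / Real.sqrt ((ℓ' : ℝ) + 1)) *
        (Real.sqrt (J t) / Real.sqrt ((ℓ' : ℝ) + 1)) =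
        (1 / ((ℓ' : ℝ) + 1)) * (Real.sqrt (I t) * Real.sqrt (J t)) := by
      rw [div_mul_div_comm, Real.mul_self_sqrt (by positivity)]
      ring
    rw [h1]
    push_cast
    ring
  calc ((Real.sqrt (I t) / Real.sqrt ((ℓ' : ℝ) + 1) : ℝ) : ℂ) *
        numberKet n ℓ' (fun u => I u - if u = t then 1 else 0) a *
        (((Real.sqrt (J t) / Real.sqrt ((ℓ' : ℝ) + 1) : ℝ) : ℂ) *
          (starRingEnd ℂ) (numberKet n ℓ' (fun u => J u - if u = t then 1 else 0) b))
      = (((Real.sqrt (I t) / Real.sqrt ((ℓ' : ℝ) + 1) : ℝ) : ℂ) *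
         ((Real.sqrt (J t) / Real.sqrt ((ℓ' : ℝ) + 1) : ℝ) : ℂ)) *
        (numberKet n ℓ' (fun u => I u - if u = t then 1 else 0) a *
          (starRingEnd ℂ) (numberKet n ℓ' (fun u => J u - if u = t then 1 else 0) b)) := by ring
    _ = _ := by rw [key]; ring
end
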